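/- arXiv:2104.04914 — 7 statements merged into one kernel-verified Lean document; each statement's English description precedes it below -/
import Mathlib

section
/- The infinite k-regular tree with k ≥ 3 admits no locating t-coloring for any finite t; that is, its locating chromatic number is infinite. -/
/-! Fix a vertex `r`. In a tree all of whose vertices have degree `k ≥ 3`, every vertex has at most
one neighbour closer to `r` (the penultimate vertex of the path from `r`), hence at least `k - 1`
neighbours farther away, so the sphere of radius `n` around `r` has at least `(k - 1) ^ n ≥ 2 ^ n`
vertices. On the other hand each coordinate of a color code is `1`-Lipschitz in the vertex, so the
codes of vertices at distance `n` from `r` lie in a box of side `2 n + 1` around the code of `r`,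
which holds only `(2 n + 1) ^ t` points. For large `n` exponential beats polynomial, so the codes
cannot all be distinct. -/

open Set

/-- The distance from a vertex `v` to the color class of color `i`. -/
noncomputable def distClass {V : Type*} (G : SimpleGraph V) {t : ℕ}
    (c : V → Fin t) (v : V) (i : Fin t) : ℕ :=
  sInf {m : ℕ | ∃ x, c x = i ∧ G.dist v x = m}

/-- A locating coloring: a proper coloring in which all vertices have
pairwise distinct color codes. -/
noncomputable def IsLocatingColoring {V : Type*} (G : SimpleGraph V) {t : ℕ}
    (c : V → Fin t) : Prop :=
  (∀ u v, G.Adj u v → c u ≠ c v) ∧ Function.Injective (fun v => distClass G c v)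

open Finset Filter Asymptotics

theorem exists_pow_lt_two_pow (t : ℕ) : ∃ n : ℕ, (2 * n + 1) ^ t < 2 ^ n := by
  have hlin : (fun n : ℕ => ((2 * n + 1 : ℕ) : ℝ)) =O[atTop] (fun n => (n : ℝ)) := by
    refine IsBigO.of_bound 3 ?_
    filter_upwards [eventually_ge_atTop 1] with n hn
    simp only [Real.norm_natCast]
    push_cast
    linarith [(Nat.one_le_cast (α := ℝ)).2 hn]
  have hlo := (hlin.pow t).trans_isLittleO (isLittleO_pow_const_const_pow_of_one_lt t one_lt_two)
  obtain ⟨n, hn⟩ := (hlo.def one_half_pos).exists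
  refine ⟨n, ?_⟩
  simp only [norm_pow, Real.norm_natCast, Real.norm_ofNat] at hn
  have : (0 : ℝ) < 2 ^ n := by positivity
  exact_mod_cast (hn.trans_lt (by linarith) : ((2 * n + 1 : ℕ) : ℝ) ^ t < 2 ^ n)

namespace SimpleGraph

variable {V : Type*} {G : SimpleGraph V}

theorem distClass_le_add_dist (hconn : G.Connected) {t : ℕ} (c : V → Fin t) (u w : V)
    (i : Fin t) : distClass G c u i ≤ distClass G c w i + G.dist u w := by
  by_cases hi : ∃ x, c x = i
  · obtain ⟨x, hx⟩ := hi
    obtain ⟨y, hy, hwy⟩ :=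
      Nat.sInf_mem (s := {m | ∃ x, c x = i ∧ G.dist w x = m}) ⟨_, x, hx, rfl⟩
    have huy : distClass G c u i ≤ G.dist u y := Nat.sInf_le ⟨y, hy, rfl⟩
    have hwy : G.dist w y = distClass G c w i := hwy
    have := hconn.dist_triangle (u := u) (v := w) (w := y)
    omega
  · push Not at hi
    simp [distClass, hi]

theorem card_le_of_injOn_distClass (hconn : G.Connected) {t : ℕ} (c : V → Fin t) {r : V}
    {n : ℕ} {s : Finset V} (hs : ∀ u ∈ s, G.dist r u ≤ n)
    (hinj : Set.InjOn (fun v => distClass G c v) s) : #s ≤ (2 * n + 1) ^ t := by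
  let box := Finset.Icc (fun i => distClass G c r i - n) (fun i => distClass G c r i + n)
  have hmaps : Set.MapsTo (fun v => distClass G c v) s box := by
    intro u hu
    have h₁ := distClass_le_add_dist hconn c u r
    have h₂ := distClass_le_add_dist hconn c r u
    rw [dist_comm] at h₁
    have := hs u hu
    simp only [box, coe_Icc, Set.mem_Icc, Pi.le_def]
    exact ⟨fun i => by have := h₂ i; omega, fun i => by have := h₁ i; omega⟩
  calc #s ≤ #box := card_le_card_of_injOn _ hmaps hinj
    _ = ∏ i, #(Finset.Icc (distClass G c r i - n) (distClass G c r i + n)) := Pi.card_Icc _ _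
    _ ≤ ∏ _i : Fin t, (2 * n + 1) := prod_le_prod' fun i _ => by rw [Nat.card_Icc]; omega
    _ = (2 * n + 1) ^ t := by simp

theorem IsTree.eq_penultimate_of_adj_of_dist_add_one (hG : G.IsTree) {r u w : V}
    {p : G.Walk r u} (hp : p.IsPath) (hadj : G.Adj u w) (hd : G.dist r w + 1 = G.dist r u) :
    w = p.penultimate := by
  classical
  obtain ⟨q, hq, hql⟩ := hG.connected.exists_path_of_dist r w
  have hu : u ∉ q.support := fun hu => by
    have := (dist_le (q.takeUntil u hu)).trans (q.length_takeUntil_le_length hu)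
    omega
  exact hG.isAcyclic.eq_penultimate_of_adj_end hp hadj
    (hG.isAcyclic.mem_support_of_ne_mem_support_of_adj_of_isPath hp hq hadj hu)

theorem IsTree.exists_finset_children {k : ℕ} (hG : G.IsTree)
    (hreg : ∀ v, (G.neighborSet v).ncard = k) (r u : V) :
    ∃ C : Finset V, #C = k - 1 ∧ ∀ w ∈ C, G.Adj u w ∧ G.dist r w = G.dist r u + 1 := by
  set S := {w | G.Adj u w ∧ G.dist r w = G.dist r u + 1}
  suffices ∃ C : Finset V, #C = k - 1 ∧ ↑C ⊆ S from this
  rcases S.finite_or_infinite with hS | hS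
  · obtain ⟨p, hp, -⟩ := hG.connected.exists_path_of_dist r u
    have hsub : G.neighborSet u ⊆ S ∪ {p.penultimate} := by
      intro w hw
      rcases hG.dist_eq_dist_add_one_of_adj r hw with h | h
      · exact Or.inr (hG.eq_penultimate_of_adj_of_dist_add_one hp hw h.symm)
      · exact Or.inl ⟨hw, h⟩
    have hcard : k - 1 ≤ #hS.toFinset := by
      have := (Set.ncard_le_ncard hsub (hS.union (Set.finite_singleton _))).trans
        (Set.ncard_union_le _ _)
      rw [hreg, Set.ncard_singleton, Set.ncard_eq_toFinset_card S hS] at this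
      omega
    obtain ⟨C, hC, hCcard⟩ := exists_subset_card_eq hcard
    exact ⟨C, hCcard, by simpa using hC⟩
  · obtain ⟨C, hC, hCcard⟩ := hS.exists_subset_card_eq (k - 1)
    exact ⟨C, hCcard, hC⟩

theorem IsTree.exists_finset_card_eq_pow_and_dist_eq {k : ℕ} (hG : G.IsTree)
    (hreg : ∀ v, (G.neighborSet v).ncard = k) (r : V) (n : ℕ) :
    ∃ s : Finset V, #s = (k - 1) ^ n ∧ ∀ u ∈ s, G.dist r u = n := by
  classical
  choose C hCcard hC using hG.exists_finset_children hreg r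
  induction n with
  | zero => exact ⟨{r}, by simp, by simp⟩
  | succ n ih =>
    obtain ⟨s, hcard, hs⟩ := ih
    refine ⟨s.biUnion C, ?_, ?_⟩
    · rw [card_biUnion, sum_congr rfl fun u _ => hCcard u, sum_const, hcard, smul_eq_mul,
        pow_succ, mul_comm]
      intro u hu v hv huv
      refine Finset.disjoint_left.2 fun w hwu hwv => huv ?_
      obtain ⟨p, hp, -⟩ := hG.connected.exists_path_of_dist r w
      rw [hG.eq_penultimate_of_adj_of_dist_add_one hp (hC u w hwu).1.symm (hC u w hwu).2.symm,
        hG.eq_penultimate_of_adj_of_dist_add_one hp (hC v w hwv).1.symm (hC v w hwv).2.symm]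
    · simp only [Finset.mem_biUnion]
      rintro w ⟨u, hu, hw⟩
      rw [(hC u w hw).2, hs u hu]

end SimpleGraph

theorem stmt_5 {V : Type*} (G : SimpleGraph V) (k : ℕ) (hk : 3 ≤ k)
    (hconn : G.Connected) (hacyc : G.IsAcyclic)
    (hreg : ∀ v : V, (G.neighborSet v).ncard = k) :
    ¬ ∃ (t : ℕ) (c : V → Fin t), IsLocatingColoring G c := by
  rintro ⟨t, c, -, hinj⟩
  obtain ⟨r⟩ := hconn.nonempty
  obtain ⟨n, hn⟩ := exists_pow_lt_two_pow t
  obtain ⟨s, hcard, hs⟩ :=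
    SimpleGraph.IsTree.exists_finset_card_eq_pow_and_dist_eq ⟨hconn, hacyc⟩ hreg r n
  have hcodes :=
    SimpleGraph.card_le_of_injOn_distClass hconn c (fun u hu => (hs u hu).le) hinj.injOn
  have hgrowth : 2 ^ n ≤ (k - 1) ^ n := Nat.pow_le_pow_left (by omega) n
  omega
end

section
/- The locating chromatic number of the path on 1 vertex is 1, of the path on 2 vertices is 2, and of the path on n vertices for any n ≥ 3 is 3. -/
open Set

open SimpleGraph

lemma pg_walk_lb {n : ℕ} {u v : Fin n} (p : (pathGraph n).Walk u v) :
    ((u : ℤ) - (v : ℤ)).natAbs ≤ p.length := by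
  induction p with
  | nil => simp
  | @cons a b c h p ih =>
    rw [pathGraph_adj] at h
    rw [SimpleGraph.Walk.length_cons]
    omega

lemma pg_dist_le {n : ℕ} : ∀ (k : ℕ) (u v : Fin n), u.val + k = v.val →
    (pathGraph n).dist u v ≤ k := by
  intro k
  induction k with
  | zero =>
    intro u v h
    have : u = v := Fin.ext (by omega)
    subst this
    simp
  | succ k ih =>
    intro u v h
    have hw : u.val + 1 < n := by have := v.isLt; omega
    set w : Fin n := ⟨u.val + 1, hw⟩ with hwdef
    have hadj : (pathGraph n).Adj u w := pathGraph_adj.mpr (Or.inl rfl)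
    have h1 : (pathGraph n).dist u w ≤ 1 := by
      have := SimpleGraph.dist_le hadj.toWalk
      simpa using this
    have h2 := ih w v (by simp only [hwdef]; omega)
    have hconn : (pathGraph n).Connected := by
      obtain ⟨m, rfl⟩ : ∃ m, n = m + 1 := ⟨n - 1, by have := u.pos; omega⟩
      exact pathGraph_connected m
    calc (pathGraph n).dist u v ≤ (pathGraph n).dist u w + (pathGraph n).dist w v :=
          hconn.dist_triangle
      _ ≤ 1 + k := by omega
      _ = k + 1 := by omega

lemma pg_dist {n : ℕ} (u v : Fin n) :
    (pathGraph n).dist u v = ((u : ℤ) - (v : ℤ)).natAbs := by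
  have hconn : (pathGraph n).Connected := by
    obtain ⟨m, rfl⟩ : ∃ m, n = m + 1 := ⟨n - 1, by have := u.pos; omega⟩
    exact pathGraph_connected m
  apply le_antisymm
  · rcases le_or_gt u.val v.val with h | h
    · have := pg_dist_le (v.val - u.val) u v (by omega)
      omega
    · have := pg_dist_le (u.val - v.val) v u (by omega)
      rw [SimpleGraph.dist_comm]
      omega
  · obtain ⟨p, hp⟩ := (hconn u v).exists_walk_length_eq_dist
    have := pg_walk_lb p
    omega

lemma distClass_eq_of_unique {V : Type*} (G : SimpleGraph V) {t : ℕ} (c : V → Fin t)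
    (v x0 : V) (i : Fin t) (h : ∀ x, c x = i ↔ x = x0) :
    distClass G c v i = G.dist v x0 := by
  have hs : {m : ℕ | ∃ x, c x = i ∧ G.dist v x = m} = {G.dist v x0} := by
    ext m
    constructor
    · rintro ⟨x, hx, rfl⟩
      rw [h] at hx
      subst hx
      rfl
    · rintro rfl
      exact ⟨x0, (h x0).mpr rfl, rfl⟩
  rw [distClass, hs, csInf_singleton]

lemma distClass_self {V : Type*} (G : SimpleGraph V) {t : ℕ} (c : V → Fin t) (v : V) :
    distClass G c v (c v) = 0 :=
  Nat.sInf_eq_zero.mpr (Or.inl ⟨v, rfl, SimpleGraph.dist_self⟩)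

/-- the locating 3-coloring of a path -/
def pcol (n : ℕ) (v : Fin n) : Fin 3 :=
  if v.val = 0 then 0 else if v.val % 2 = 1 then 1 else 2

lemma pcol_val {n : ℕ} (v : Fin n) :
    (pcol n v).val = if v.val = 0 then 0 else if v.val % 2 = 1 then 1 else 2 := by
  unfold pcol
  split_ifs <;> rfl

theorem stmt_7 :
    IsLeast {t : ℕ | ∃ c : Fin 1 → Fin t, IsLocatingColoring (SimpleGraph.pathGraph 1) c} 1 ∧
    IsLeast {t : ℕ | ∃ c : Fin 2 → Fin t, IsLocatingColoring (SimpleGraph.pathGraph 2) c} 2 ∧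
    ∀ n : ℕ, 3 ≤ n →
      IsLeast {t : ℕ | ∃ c : Fin n → Fin t, IsLocatingColoring (SimpleGraph.pathGraph n) c} 3 := by
  refine ⟨⟨⟨fun _ => 0, ?_, ?_⟩, ?_⟩, ⟨⟨id, ?_, ?_⟩, ?_⟩, ?_⟩
  · -- pathGraph 1 proper
    intro u v hadj
    rw [pathGraph_adj] at hadj
    have hu := u.isLt; have hv := v.isLt
    omega
  · intro u v _
    exact Subsingleton.elim u v
  · -- lower bound 1
    rintro t ⟨c, _⟩
    exact (c 0).pos
  · -- pathGraph 2 proper with id coloring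
    intro u v hadj h
    exact hadj.ne h
  · -- injective codes for pathGraph 2
    intro u v h
    have h0 := congrFun h (0 : Fin 2)
    simp only at h0
    have key : ∀ w : Fin 2, distClass (pathGraph 2) id w 0 = w.val := by
      intro w
      rw [distClass_eq_of_unique (pathGraph 2) id w 0 0 (fun x => Iff.rfl), pg_dist]
      simp
    rw [key u, key v] at h0
    exact Fin.ext h0
  · -- lower bound 2
    rintro t ⟨c, hc, _⟩
    have hadj : (pathGraph 2).Adj 0 1 := pathGraph_adj.mpr (Or.inl rfl)
    have hne := hc 0 1 hadj
    have h0 := (c 0).isLt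
    have h1 := (c 1).isLt
    rcases Nat.lt_or_ge t 2 with h | h
    · exfalso
      exact hne (Fin.ext (by omega))
    · exact h
  · -- n ≥ 3
    intro n hn
    constructor
    · -- membership: pcol is a locating 3-coloring
      refine ⟨pcol n, ?_, ?_⟩
      · intro u v hadj h
        rw [pathGraph_adj] at hadj
        have := congrArg Fin.val h
        rw [pcol_val, pcol_val] at this
        split_ifs at this <;> omega
      · intro u v h
        have h0 := congrFun h (0 : Fin 3)
        simp only at h0
        have hz : (0 : ℕ) < n := by omega
        have key : ∀ w : Fin n, distClass (pathGraph n) (pcol n) w 0 = w.val := by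
          intro w
          rw [distClass_eq_of_unique (pathGraph n) (pcol n) w ⟨0, hz⟩ 0, pg_dist]
          · simp
          · intro x
            constructor
            · intro hx
              have := congrArg Fin.val hx
              rw [pcol_val] at this
              split_ifs at this <;> first | (exact Fin.ext (show x.val = (0:ℕ) by omega)) | omega
            · rintro rfl
              rfl
        rw [key u, key v] at h0
        exact Fin.ext h0
    · -- lower bound 3
      rintro t ⟨c, hc, hinj⟩
      by_contra hlt
      push_neg at hlt
      have h0n : (0 : ℕ) < n := by omega
      have h1n : (1 : ℕ) < n := by omega
      have h2n : (2 : ℕ) < n := by omega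
      set v0 : Fin n := ⟨0, h0n⟩
      set v1 : Fin n := ⟨1, h1n⟩
      set v2 : Fin n := ⟨2, h2n⟩
      have hadj01 : (pathGraph n).Adj v0 v1 := pathGraph_adj.mpr (Or.inl rfl)
      have hadj12 : (pathGraph n).Adj v1 v2 := pathGraph_adj.mpr (Or.inl rfl)
      have hne01 := hc _ _ hadj01
      have hne12 := hc _ _ hadj12
      have hc0 := (c v0).isLt
      have hc1 := (c v1).isLt
      have hc2 := (c v2).isLt
      have hne01' : (c v0).val ≠ (c v1).val := fun h => hne01 (Fin.ext h)
      have hne12' : (c v1).val ≠ (c v2).val := fun h => hne12 (Fin.ext h)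
      have hc02 : c v0 = c v2 := Fin.ext (by omega)
      have hconn : (pathGraph n).Connected := by
        obtain ⟨m, rfl⟩ : ∃ m, n = m + 1 := ⟨n - 1, by omega⟩
        exact pathGraph_connected m
      have key : ∀ w : Fin n, c w ≠ c v1 → (pathGraph n).dist w v1 = 1 →
          distClass (pathGraph n) c w (c v1) = 1 := by
        intro w hw hd
        have hmem : (1 : ℕ) ∈ {m : ℕ | ∃ x, c x = c v1 ∧ (pathGraph n).dist w x = m} :=
          ⟨v1, rfl, hd⟩
        have hle : sInf {m : ℕ | ∃ x, c x = c v1 ∧ (pathGraph n).dist w x = m} ≤ 1 :=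
          Nat.sInf_le hmem
        have hne0 : sInf {m : ℕ | ∃ x, c x = c v1 ∧ (pathGraph n).dist w x = m} ≠ 0 := by
          intro h
          rcases Nat.sInf_eq_zero.mp h with ⟨x, hx, hdx⟩ | hempty
          · have : w = x := (hconn.dist_eq_zero_iff).mp hdx
            subst this
            exact hw hx
          · exact absurd hmem (by rw [hempty]; exact notMem_empty 1)
        have := Nat.pos_of_ne_zero hne0
        rw [distClass]
        omega
      have e0 : distClass (pathGraph n) c v0 (c v1) = 1 := by
        apply key v0 hne01
        rw [pg_dist]; rfl
      have e2 : distClass (pathGraph n) c v2 (c v1) = 1 := by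
        apply key v2 (fun h => hne12 h.symm)
        rw [pg_dist]; rfl
      have hcodes : distClass (pathGraph n) c v0 = distClass (pathGraph n) c v2 := by
        funext i
        have hi := i.isLt
        have : i = c v0 ∨ i = c v1 := by
          by_cases h : i.val = (c v0).val
          · exact Or.inl (Fin.ext h)
          · exact Or.inr (Fin.ext (by omega))
        rcases this with rfl | rfl
        · rw [distClass_self, hc02, distClass_self]
        · rw [e0, e2]
      have hv02 : v0 = v2 := hinj hcodes
      have := congrArg Fin.val hv02
      simp only [v0, v2] at this
      omega
end

section
/- The one-way infinite path (ray) has locating chromatic number 3: it admits a locating 3-coloring but no locating 2-coloring. -/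
open Set

/-- The one-way infinite path (ray) on vertex set `ℕ`. -/
def rayGraph : SimpleGraph ℕ := SimpleGraph.fromRel (fun a b => b = a + 1)

lemma ray_adj {a b : ℕ} : rayGraph.Adj a b ↔ a ≠ b ∧ (b = a + 1 ∨ a = b + 1) := by
  simp [rayGraph, SimpleGraph.fromRel_adj]

lemma ray_adj_succ (n : ℕ) : rayGraph.Adj n (n + 1) := by
  rw [ray_adj]; omega

lemma ray_reach_zero (n : ℕ) : rayGraph.Reachable n 0 := by
  induction n with
  | zero => exact SimpleGraph.Reachable.refl 0
  | succ k ih => exact (SimpleGraph.Adj.reachable (ray_adj_succ k)).symm.trans ih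

lemma ray_connected : rayGraph.Connected := by
  rw [SimpleGraph.connected_iff]
  refine ⟨fun a b => (ray_reach_zero a).trans (ray_reach_zero b).symm, ⟨0⟩⟩

lemma ray_walk_bound {a b : ℕ} (p : rayGraph.Walk a b) :
    b ≤ a + p.length ∧ a ≤ b + p.length := by
  induction p with
  | nil => simp
  | cons h q ih =>
    rw [ray_adj] at h
    simp only [SimpleGraph.Walk.length_cons]
    omega

lemma ray_dist_zero (n : ℕ) : rayGraph.dist n 0 = n := by
  have h1 : rayGraph.dist n 0 ≤ n := by
    induction n with
    | zero => simp
    | succ k ih =>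
      calc rayGraph.dist (k + 1) 0 ≤ rayGraph.dist (k + 1) k + rayGraph.dist k 0 :=
            ray_connected.dist_triangle
        _ ≤ k + 1 := by
            have : rayGraph.dist (k + 1) k = 1 :=
              SimpleGraph.dist_eq_one_iff_adj.mpr ((ray_adj_succ k).symm)
            omega
  obtain ⟨p, hp⟩ := (ray_reach_zero n).exists_walk_length_eq_dist
  have := (ray_walk_bound p).2
  omega

lemma ray_dist_eq_zero_iff {a b : ℕ} : rayGraph.dist a b = 0 ↔ a = b :=
  (ray_connected a b).dist_eq_zero_iff

/-- color used for part 1 -/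
noncomputable def rayCol : ℕ → Fin 3 := fun n =>
  if n = 0 then 0 else if n % 2 = 1 then 1 else 2

lemma rayCol_eq_zero {n : ℕ} : rayCol n = 0 ↔ n = 0 := by
  unfold rayCol
  split
  · simp_all
  · split <;> simp_all <;> omega

theorem stmt_8 :
    (∃ c : ℕ → Fin 3, IsLocatingColoring rayGraph c) ∧
    ¬ (∃ c : ℕ → Fin 2, IsLocatingColoring rayGraph c) := by
  constructor
  · refine ⟨rayCol, ?_, ?_⟩
    · intro u v huv
      rw [ray_adj] at huv
      unfold rayCol
      rcases huv with ⟨hne, h | h⟩ <;> subst h <;>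
        · split_ifs <;> first | decide | omega | (exfalso; omega) | simp_all
    · intro u v huv
      have key : ∀ w : ℕ, distClass rayGraph rayCol w 0 = w := by
        intro w
        unfold distClass
        have : {m : ℕ | ∃ x, rayCol x = 0 ∧ rayGraph.dist w x = m} = {w} := by
          ext m
          simp only [mem_setOf_eq, mem_singleton_iff]
          constructor
          · rintro ⟨x, hx, rfl⟩
            rw [rayCol_eq_zero] at hx
            subst hx
            exact ray_dist_zero w
          · intro hm
            exact ⟨0, rayCol_eq_zero.mpr rfl, by rw [hm]; exact ray_dist_zero w⟩
        rw [this]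
        simp
      have := congrFun huv 0
      simp only at this
      rw [key u, key v] at this
      exact this
  · rintro ⟨c, hproper, hinj⟩
    have h01 : c 0 ≠ c 1 := hproper 0 1 (ray_adj_succ 0)
    have h12 : c 1 ≠ c 2 := hproper 1 2 (ray_adj_succ 1)
    have h02 : c 0 = c 2 := by omega
    have hcases : ∀ i : Fin 2, i = c 0 ∨ i = c 1 := by omega
    have key : distClass rayGraph c 0 = distClass rayGraph c 2 := by
      funext i
      rcases hcases i with rfl | rfl
      · unfold distClass
        have hz1 : (0 : ℕ) ∈ {m : ℕ | ∃ x, c x = c 0 ∧ rayGraph.dist 0 x = m} :=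
          ⟨0, rfl, by simp⟩
        have hz2 : (0 : ℕ) ∈ {m : ℕ | ∃ x, c x = c 0 ∧ rayGraph.dist 2 x = m} :=
          ⟨2, h02.symm, by simp⟩
        rw [Nat.sInf_eq_zero.mpr (Or.inl hz1), Nat.sInf_eq_zero.mpr (Or.inl hz2)]
      · unfold distClass
        have d01 : rayGraph.dist 0 1 = 1 := SimpleGraph.dist_eq_one_iff_adj.mpr (ray_adj_succ 0)
        have d21 : rayGraph.dist 2 1 = 1 :=
          SimpleGraph.dist_eq_one_iff_adj.mpr ((ray_adj_succ 1).symm)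
        have e1 : sInf {m : ℕ | ∃ x, c x = c 1 ∧ rayGraph.dist 0 x = m} = 1 := by
          have hmem : (1 : ℕ) ∈ {m : ℕ | ∃ x, c x = c 1 ∧ rayGraph.dist 0 x = m} :=
            ⟨1, rfl, d01⟩
          have hnz : (0 : ℕ) ∉ {m : ℕ | ∃ x, c x = c 1 ∧ rayGraph.dist 0 x = m} := by
            rintro ⟨x, hx, hd⟩
            rw [ray_dist_eq_zero_iff] at hd
            subst hd
            exact h01 hx
          have hle := Nat.sInf_le hmem
          have : sInf {m : ℕ | ∃ x, c x = c 1 ∧ rayGraph.dist 0 x = m} ≠ 0 := by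
            intro h
            rw [Nat.sInf_eq_zero] at h
            rcases h with h | h
            · exact hnz h
            · rw [h] at hmem; exact hmem
          omega
        have e2 : sInf {m : ℕ | ∃ x, c x = c 1 ∧ rayGraph.dist 2 x = m} = 1 := by
          have hmem : (1 : ℕ) ∈ {m : ℕ | ∃ x, c x = c 1 ∧ rayGraph.dist 2 x = m} :=
            ⟨1, rfl, d21⟩
          have hnz : (0 : ℕ) ∉ {m : ℕ | ∃ x, c x = c 1 ∧ rayGraph.dist 2 x = m} := by
            rintro ⟨x, hx, hd⟩
            rw [ray_dist_eq_zero_iff] at hd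
            subst hd
            exact h12 hx.symm
          have hle := Nat.sInf_le hmem
          have : sInf {m : ℕ | ∃ x, c x = c 1 ∧ rayGraph.dist 2 x = m} ≠ 0 := by
            intro h
            rw [Nat.sInf_eq_zero] at h
            rcases h with h | h
            · exact hnz h
            · rw [h] at hmem; exact hmem
          omega
        rw [e1, e2]
    have := hinj key
    simp at this
end

section
/- The comb graph (the two-way infinite path with one pendant vertex attached to each path vertex) has finite locating chromatic number; in fact it admits a locating 4-coloring. -/
open Set

/-- The comb graph: the two-way infinite path on the spine `ℤ × {false}`,
with a pendant tooth `(i, true)` attached to each spine vertex `(i, false)`. -/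
def combGraph : SimpleGraph (ℤ × Bool) :=
  SimpleGraph.fromRel (fun u v =>
    (u.2 = false ∧ v.2 = false ∧ v.1 = u.1 + 1) ∨
    (u.2 = false ∧ v.2 = true ∧ v.1 = u.1))

namespace CombAux

/-- The distance formula for the comb graph. -/
def D (u v : ℤ × Bool) : ℕ :=
  if u = v then 0 else (u.1 - v.1).natAbs + u.2.toNat + v.2.toNat

lemma adj_cases {i j : ℤ} {a b : Bool} (h : combGraph.Adj (i, a) (j, b)) :
    (a = false ∧ b = false ∧ (j = i + 1 ∨ i = j + 1)) ∨
    (i = j ∧ ((a = false ∧ b = true) ∨ (a = true ∧ b = false))) := by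
  rw [combGraph, SimpleGraph.fromRel_adj] at h
  obtain ⟨-, h⟩ := h
  rcases h with (⟨h1, h2, h3⟩ | ⟨h1, h2, h3⟩) | (⟨h1, h2, h3⟩ | ⟨h1, h2, h3⟩)
  · exact Or.inl ⟨h1, h2, Or.inl h3⟩
  · exact Or.inr ⟨h3.symm, Or.inl ⟨h1, h2⟩⟩
  · exact Or.inl ⟨h2, h1, Or.inr h3⟩
  · exact Or.inr ⟨h3, Or.inr ⟨h2, h1⟩⟩

lemma adj_spine (i : ℤ) : combGraph.Adj (i, false) (i + 1, false) := by
  rw [combGraph, SimpleGraph.fromRel_adj]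
  refine ⟨by simp, Or.inl (Or.inl ⟨rfl, rfl, rfl⟩)⟩

lemma adj_tooth (i : ℤ) : combGraph.Adj (i, false) (i, true) := by
  rw [combGraph, SimpleGraph.fromRel_adj]
  exact ⟨by simp, Or.inl (Or.inr ⟨rfl, rfl, rfl⟩)⟩

lemma D_step (t : ℤ × Bool) {u v : ℤ × Bool} (h : combGraph.Adj u v) :
    D u t ≤ D v t + 1 := by
  obtain ⟨i, a⟩ := u; obtain ⟨j, b⟩ := v; obtain ⟨k, c⟩ := t
  have hc := adj_cases h
  simp only [D, Prod.mk.injEq]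
  cases a <;> cases b <;> cases c <;> split_ifs <;> simp_all <;> omega

lemma walk_le : ∀ {u t : ℤ × Bool} (w : combGraph.Walk u t), D u t ≤ w.length := by
  intro u t w
  induction w with
  | nil => simp [D]
  | @cons x y z h p ih =>
      have := D_step z h
      simp only [SimpleGraph.Walk.length_cons]
      omega

lemma spine_walk : ∀ (n : ℕ) (i j : ℤ), (i - j).natAbs = n →
    ∃ w : combGraph.Walk (i, false) (j, false), w.length = n := by
  intro n
  induction n with
  | zero =>
      intro i j h
      have : i = j := by omega
      subst this
      exact ⟨.nil, rfl⟩
  | succ n ih =>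
      intro i j h
      rcases lt_or_gt_of_ne (show i ≠ j by omega) with hlt | hgt
      · obtain ⟨w, hw⟩ := ih (i + 1) j (by omega)
        exact ⟨.cons (adj_spine i) w, by simp [hw]⟩
      · obtain ⟨w, hw⟩ := ih (i - 1) j (by omega)
        have ha : combGraph.Adj (i, false) (i - 1, false) := by
          have := (adj_spine (i - 1)).symm
          rwa [sub_add_cancel] at this
        exact ⟨.cons ha w, by simp [hw]⟩

lemma exists_walk (u v : ℤ × Bool) :
    ∃ w : combGraph.Walk u v, w.length = D u v := by
  by_cases huv : u = v
  · subst huv; exact ⟨.nil, by simp [D]⟩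
  · obtain ⟨i, a⟩ := u; obtain ⟨j, b⟩ := v
    obtain ⟨w, hw⟩ := spine_walk (i - j).natAbs i j rfl
    cases a <;> cases b
    · exact ⟨w, by simp [D, huv, hw]⟩
    · refine ⟨w.append (.cons (adj_tooth j) .nil), ?_⟩
      simp [D, huv, hw]
    · refine ⟨.cons (adj_tooth i).symm w, ?_⟩
      simp [D, huv, hw]
    · have hij : i ≠ j := by
        intro h; exact huv (by rw [h])
      refine ⟨.cons (adj_tooth i).symm (w.append (.cons (adj_tooth j) .nil)), ?_⟩
      simp [D, huv, hw]
  
lemma dist_eq (u v : ℤ × Bool) : combGraph.dist u v = D u v := by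
  obtain ⟨w, hw⟩ := exists_walk u v
  refine le_antisymm (hw ▸ SimpleGraph.dist_le w) ?_
  obtain ⟨p, hp⟩ := w.reachable.exists_walk_length_eq_dist
  rw [← hp]
  exact walk_le p

/-- The locating coloring. -/
def col : ℤ × Bool → Fin 4 := fun v =>
  if v.2 = true then 3
  else if v.1 = 0 then 2
  else if v.1 % 2 = 1 then (if 0 < v.1 then 0 else 1)
  else (if 0 < v.1 then 1 else 0)

lemma col_tooth (i : ℤ) : col (i, true) = 3 := rfl

lemma colS_eq0 {i : ℤ} : col (i, false) = 0 ↔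
    ((0 < i ∧ i % 2 = 1) ∨ (i < 0 ∧ i % 2 = 0)) := by
  simp only [col]
  split_ifs <;> simp_all <;> omega

lemma colS_eq1 {i : ℤ} : col (i, false) = 1 ↔
    ((0 < i ∧ i % 2 = 0) ∨ (i < 0 ∧ i % 2 = 1)) := by
  simp only [col]
  split_ifs <;> simp_all <;> omega

lemma col_eq_two {x : ℤ × Bool} : col x = 2 ↔ x = (0, false) := by
  obtain ⟨i, a⟩ := x
  cases a <;> simp only [col] <;> split_ifs <;> simp_all

lemma col_eq_three {x : ℤ × Bool} : col x = 3 ↔ x.2 = true := by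
  obtain ⟨i, a⟩ := x
  cases a <;> simp only [col] <;> split_ifs <;> simp_all

lemma distClass_eq {v : ℤ × Bool} {i : Fin 4} {m : ℕ}
    (h1 : ∃ x, col x = i ∧ D v x = m) (h2 : ∀ x, col x = i → m ≤ D v x) :
    distClass combGraph col v i = m := by
  unfold distClass
  simp only [dist_eq]
  obtain ⟨x, hx1, hx2⟩ := h1
  refine le_antisymm (Nat.sInf_le ⟨x, hx1, hx2⟩) (le_csInf ⟨m, x, hx1, hx2⟩ ?_)
  rintro k ⟨y, hy1, rfl⟩
  exact h2 y hy1

lemma dc3 (v : ℤ × Bool) :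
    distClass combGraph col v 3 = if v.2 = true then 0 else 1 := by
  obtain ⟨i, a⟩ := v
  apply distClass_eq
  · refine ⟨(i, true), col_tooth i, ?_⟩
    cases a <;> simp [D]
  · intro x hx
    obtain ⟨k, c⟩ := x
    cases c
    · simp [col_eq_three] at hx
    · cases a
      · simp only [D]
        rw [if_neg (by simp)]
        simp
      · simp

lemma dc2 (v : ℤ × Bool) : distClass combGraph col v 2 = D v (0, false) := by
  apply distClass_eq
  · exact ⟨(0, false), by simp [col], rfl⟩
  · intro x hx
    rw [col_eq_two.mp hx]

lemma near0 (i : ℤ) (h : col (i, false) ≠ 0) :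
    ∃ j, (i - j).natAbs = 1 ∧ col (j, false) = 0 := by
  have h' := colS_eq0 (i := i)
  rcases lt_trichotomy i 0 with hi | hi | hi
  · refine ⟨i - 1, by omega, colS_eq0.mpr ?_⟩
    right
    constructor
    · omega
    · omega
  · exact ⟨1, by omega, colS_eq0.mpr (Or.inl ⟨by omega, by omega⟩)⟩
  · refine ⟨i - 1, by omega, colS_eq0.mpr ?_⟩
    left
    have : i % 2 = 0 := by
      by_contra hc
      exact h (colS_eq0.mpr (Or.inl ⟨hi, by omega⟩))
    constructor
    · by_contra hc
      push_neg at hc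
      have : i = 1 := by omega
      omega
    · omega

lemma col_snd_of_eq0 {x : ℤ × Bool} (h : col x = 0) : x.2 = false := by
  obtain ⟨k, c⟩ := x
  cases c
  · rfl
  · simp [col_tooth] at h

lemma dc0 (v : ℤ × Bool) :
    distClass combGraph col v 0 =
      (if col (v.1, false) = 0 then 0 else 1) + v.2.toNat := by
  obtain ⟨i, a⟩ := v
  by_cases h : col (i, false) = 0
  · rw [if_pos h]
    apply distClass_eq
    · refine ⟨(i, false), h, ?_⟩
      cases a <;> simp [D]
    · intro x hx
      have hx2 := col_snd_of_eq0 hx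
      obtain ⟨k, c⟩ := x
      cases a
      · simp
      · subst hx2
        simp only [D]
        rw [if_neg (by simp)]
        simp
  · rw [if_neg h]
    obtain ⟨j, hj1, hj2⟩ := near0 i h
    apply distClass_eq
    · refine ⟨(j, false), hj2, ?_⟩
      have hij : i ≠ j := by omega
      simp only [D]
      rw [if_neg (by simp [hij])]
      cases a <;> simp <;> omega
    · intro x hx
      have hx2 := col_snd_of_eq0 hx
      obtain ⟨k, c⟩ := x
      subst hx2
      have hki : k ≠ i := by
        intro hc
        exact h (hc ▸ hx)
      simp only [D]
      rw [if_neg (by simp; intro hc; omega)]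
      cases a <;> simp <;> omega

lemma proper : ∀ u v, combGraph.Adj u v → col u ≠ col v := by
  intro u v h
  obtain ⟨i, a⟩ := u; obtain ⟨j, b⟩ := v
  rcases adj_cases h with ⟨ha, hb, hij⟩ | ⟨hij, (⟨ha, hb⟩ | ⟨ha, hb⟩)⟩
  · subst ha; subst hb
    simp only [col]
    split_ifs <;> simp_all <;> omega
  · subst ha; subst hb; subst hij
    intro hc
    rw [col_tooth] at hc
    exact absurd (col_eq_three.mp hc) (by simp)
  · subst ha; subst hb; subst hij
    intro hc
    rw [col_tooth] at hc
    exact absurd (col_eq_three.mp hc.symm) (by simp)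

end CombAux

open CombAux in
theorem stmt_13 : ∃ c : ℤ × Bool → Fin 4, IsLocatingColoring combGraph c := by
  refine ⟨CombAux.col, CombAux.proper, ?_⟩
  intro u v h
  have h3 := congrFun h 3
  have h2 := congrFun h 2
  have h0 := congrFun h 0
  simp only [CombAux.dc3, CombAux.dc2, CombAux.dc0] at h3 h2 h0
  clear h
  obtain ⟨i, a⟩ := u; obtain ⟨j, b⟩ := v
  have hab : a = b := by
    cases a <;> cases b <;> first | rfl | (exfalso; simp at h3)
  subst hab
  have habs : i.natAbs = j.natAbs := by
    clear h0 h3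
    simp only [CombAux.D, Prod.mk.injEq] at h2
    cases a <;> split_ifs at h2 <;> simp_all
  have hij : i = j := by
    by_contra hc
    have hji : j = -i := by omega
    have hi0 : i ≠ 0 := by omega
    have e0 : col (i, false) = 0 ↔ col (j, false) = 0 := by
      clear h2 h3
      have h0' : (if col (i, false) = 0 then (0 : ℕ) else 1)
          = (if col (j, false) = 0 then 0 else 1) := by
        cases a <;> simpa using h0
      split_ifs at h0' with p q q
      · exact iff_of_true p q
      · exact iff_of_false p q
    rw [CombAux.colS_eq0, CombAux.colS_eq0] at e0
    omega
  rw [hij]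
end

section
/- Let G_n (n ≥ 2) be the tree obtained from the ray v_0, v_1, v_2, ... by attaching the root of a complete n-ary tree of depth i to v_i for each i ≥ 1. Then G_n has no locating t-coloring for any finite t; its locating chromatic number is infinite. -/
open Set

/-- Vertices of the tree `G_n`: either a ray vertex `v_i` (`Sum.inl i`),
or a vertex of the copy of the complete `n`-ary tree of depth `i` attached at `v_i`,
encoded as `(i, d, word)` with attachment index `i ≥ 1`, depth `d ≤ i`, and a word
in `Fin n` padded by `0` from position `d` on. -/
abbrev GnVertex (n : ℕ) : Type :=
  ℕ ⊕ {p : ℕ × ℕ × (ℕ → Fin n) //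
        1 ≤ p.1 ∧ p.2.1 ≤ p.1 ∧ ∀ m, p.2.1 ≤ m → (p.2.2 m : ℕ) = 0}

/-- The tree `G_n`: the ray `v_0, v_1, v_2, …` with the root of a complete
`n`-ary tree of depth `i` attached to `v_i` for each `i ≥ 1`. -/
def GnGraph (n : ℕ) : SimpleGraph (GnVertex n) :=
  SimpleGraph.fromRel (fun u v =>
    match u, v with
    | Sum.inl a, Sum.inl b => b = a + 1
    | Sum.inl a, Sum.inr q => q.1.1 = a ∧ q.1.2.1 = 0
    | Sum.inr p, Sum.inr q =>
        p.1.1 = q.1.1 ∧ q.1.2.1 = p.1.2.1 + 1 ∧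
          ∀ m, m < p.1.2.1 → q.1.2.2 m = p.1.2.2 m
    | Sum.inr _, Sum.inl _ => False)

/-!
Fix a `t`-colouring with pairwise distinct colour codes and look at the `n ^ i` leaves of the
copy of `T(n, i)` hanging at `v_i`. Swapping labels level by level inside that copy is an
automorphism of `G_n` moving any leaf to any other while fixing every vertex outside the copy, so
all leaves have the same distance to each outside vertex. Hence the distance from a leaf to a
colour class either equals a value common to all leaves (class outside the copy) or is at most the
diameter `2 i` of the copy: the leaves carry at most `(2 i + 2) ^ t` codes. Since
`n ^ i > (2 i + 2) ^ t` for large `i`, two leaves share a code.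
-/

namespace SimpleGraph

variable {V W : Type*} {G : SimpleGraph V} {G' : SimpleGraph W}

lemma Hom.edist_map_le (f : G →g G') (u v : V) : G'.edist (f u) (f v) ≤ G.edist u v := by
  by_cases hr : G.Reachable u v
  · obtain ⟨p, hp⟩ := hr.exists_walk_length_eq_edist
    rw [← hp, ← Walk.length_map f p]
    exact edist_le _
  · rw [edist_eq_top_of_not_reachable hr]
    exact le_top

lemma Iso.dist_map (f : G ≃g G') (u v : V) : G'.dist (f u) (f v) = G.dist u v := by
  have h : G'.edist (f u) (f v) = G.edist u v := by
    refine le_antisymm (Hom.edist_map_le f.toHom u v) ?_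
    simpa using Hom.edist_map_le f.symm.toHom (f u) (f v)
  simp only [dist, h]

end SimpleGraph

section LocatingCode

variable {V : Type*} {G : SimpleGraph V} {t : ℕ} (c : V → Fin t)

lemma distClass_mem_insert_range {S : Set V} {D : ℕ} {x y : V}
    (hS : ∀ u ∈ S, G.dist x u ≤ D) (hout : ∀ u ∉ S, G.dist x u = G.dist y u) (j : Fin t) :
    distClass G c x j ∈ insert (distClass G c y j) (Finset.range (D + 1)) := by
  by_cases hj : ∃ u ∈ S, c u = j
  · obtain ⟨u, hu, rfl⟩ := hj
    exact Finset.mem_insert_of_mem <| Finset.mem_range_succ_iff.2 <|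
      (Nat.sInf_le (⟨u, rfl, rfl⟩ : ∃ y, c y = c u ∧ G.dist x y = G.dist x u)).trans (hS u hu)
  · push Not at hj
    refine Finset.mem_insert.2 <| Or.inl ?_
    exact congrArg sInf <| Set.ext fun m => exists_congr fun u => and_congr_right fun hu => by
      rw [hout u fun huS => hj u huS hu]

lemma card_le_of_injective_distClass {ι : Type*} [Fintype ι] {x : ι → V} (S : Set V) (D : ℕ)
    (hS : ∀ b, ∀ u ∈ S, G.dist (x b) u ≤ D)
    (hout : ∀ b b', ∀ u ∉ S, G.dist (x b) u = G.dist (x b') u)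
    (hinj : Function.Injective fun b => distClass G c (x b)) :
    Fintype.card ι ≤ (D + 2) ^ t := by
  rcases isEmpty_or_nonempty ι with hι | ⟨⟨b₀⟩⟩
  · simp
  let A : Fin t → Finset ℕ := fun j => insert (distClass G c (x b₀) j) (Finset.range (D + 1))
  calc Fintype.card ι ≤ (Fintype.piFinset A).card :=
        Finset.card_le_card_of_injOn _ (fun b _ => Fintype.mem_piFinset.2 fun j =>
          distClass_mem_insert_range c (hS b) (hout b b₀) j) hinj.injOn
    _ ≤ (D + 2) ^ t := by
        rw [Fintype.card_piFinset]
        refine (Finset.prod_le_pow_card _ _ (D + 2) fun j _ => ?_).trans_eq (by simp)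
        exact (Finset.card_insert_le _ _).trans (by simp)

end LocatingCode

namespace GnGraph

def copy (n i : ℕ) : Set (GnVertex n) := {v | ∃ p, v = Sum.inr p ∧ p.1.1 = i}

variable {n : ℕ} [NeZero n]

def root {j : ℕ} (hj : 1 ≤ j) : GnVertex n :=
  Sum.inr ⟨(j, 0, 0), hj, Nat.zero_le j, fun _ _ => Fin.val_zero n⟩

lemma exists_walk_root (j d : ℕ) (w : ℕ → Fin n)
    (h : 1 ≤ j ∧ d ≤ j ∧ ∀ m, d ≤ m → (w m : ℕ) = 0) :
    ∃ W : (GnGraph n).Walk (root h.1) (Sum.inr ⟨(j, d, w), h⟩), W.length = d := by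
  induction d generalizing w with
  | zero =>
    obtain rfl : w = 0 := funext fun m => Fin.ext (h.2.2 m (Nat.zero_le m))
    exact ⟨.nil, rfl⟩
  | succ d ih =>
    let parent : ℕ → Fin n := fun m => if m < d then w m else 0
    have hparent : 1 ≤ j ∧ d ≤ j ∧ ∀ m, d ≤ m → (parent m : ℕ) = 0 :=
      ⟨h.1, by omega, fun m hm => by simp [parent, hm.not_gt]⟩
    obtain ⟨W, hW⟩ := ih parent hparent
    have hadj :
        (GnGraph n).Adj (Sum.inr ⟨(j, d, parent), hparent⟩) (Sum.inr ⟨(j, d + 1, w), h⟩) := by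
      rw [GnGraph, SimpleGraph.fromRel_adj]
      exact ⟨by simp, Or.inl ⟨rfl, rfl, fun m hm => by simp [parent, hm]⟩⟩
    exact ⟨W.concat hadj, by simp [hW]⟩

lemma dist_le_of_mem_copy {i : ℕ} {u v : GnVertex n} (hu : u ∈ copy n i) (hv : v ∈ copy n i) :
    (GnGraph n).dist u v ≤ 2 * i := by
  obtain ⟨⟨⟨j, d, w⟩, h⟩, rfl, hj : j = i⟩ := hu
  obtain ⟨⟨⟨j', d', w'⟩, h'⟩, rfl, hj' : j' = i⟩ := hv
  subst hj' hj
  obtain ⟨W, hW⟩ := exists_walk_root j d w h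
  obtain ⟨W', hW'⟩ := exists_walk_root j d' w' h'
  have hd : d ≤ j := h.2.1
  have hd' : d' ≤ j := h'.2.1
  calc _ ≤ (W.reverse.append W').length := SimpleGraph.dist_le _
    _ ≤ 2 * j := by
      rw [SimpleGraph.Walk.length_append, SimpleGraph.Walk.length_reverse, hW, hW']
      omega

def swapWord (i : ℕ) (a : ℕ → Fin n) (j d : ℕ) (w : ℕ → Fin n) (m : ℕ) : Fin n :=
  if j = i ∧ m < d then Equiv.swap 0 (a m) (w m) else w m

def swapInCopy (i : ℕ) (a : ℕ → Fin n) : GnVertex n → GnVertex n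
  | Sum.inl k => Sum.inl k
  | Sum.inr ⟨(j, d, w), h⟩ => Sum.inr ⟨(j, d, swapWord i a j d w), h.1, h.2.1, fun m hm => by
      simpa [swapWord, hm.not_gt] using h.2.2 m hm⟩

lemma swapInCopy_involutive (i : ℕ) (a : ℕ → Fin n) : Function.Involutive (swapInCopy i a) := by
  rintro (k | ⟨⟨j, d, w⟩, h⟩)
  · rfl
  · simp only [swapInCopy, Sum.inr.injEq, Subtype.mk.injEq, Prod.mk.injEq, true_and]
    funext m
    by_cases hm : j = i ∧ m < d <;> simp [swapWord, hm]

lemma swapWord_eq_of_lt {i j d d' m : ℕ} {a w w' : ℕ → Fin n} (hw : ∀ m < d, w' m = w m)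
    (hd : d ≤ d') (hm : m < d) : swapWord i a j d' w' m = swapWord i a j d w m := by
  simp [swapWord, hm, hm.trans_le hd, hw m hm]

lemma swapInCopy_adj (i : ℕ) (a : ℕ → Fin n) {u v : GnVertex n} (h : (GnGraph n).Adj u v) :
    (GnGraph n).Adj (swapInCopy i a u) (swapInCopy i a v) := by
  rw [GnGraph, SimpleGraph.fromRel_adj] at h ⊢
  refine ⟨(swapInCopy_involutive i a).injective.ne h.1, ?_⟩
  rcases u with k | ⟨⟨j, d, w⟩, hu⟩ <;> rcases v with k' | ⟨⟨j', d', w'⟩, hv⟩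
    <;> simp only [swapInCopy] at h ⊢
  · exact h.2
  · exact h.2
  · exact h.2
  · rcases h.2 with ⟨rfl, rfl, hw⟩ | ⟨rfl, rfl, hw⟩
    · exact Or.inl ⟨rfl, rfl, fun m hm => swapWord_eq_of_lt hw d.le_succ hm⟩
    · exact Or.inr ⟨rfl, rfl, fun m hm => swapWord_eq_of_lt hw d'.le_succ hm⟩

def swapIso (i : ℕ) (a : ℕ → Fin n) : GnGraph n ≃g GnGraph n where
  toEquiv := (swapInCopy_involutive i a).toPerm
  map_rel_iff' {u v} := ⟨fun h => by
    simpa [swapInCopy_involutive i a _] using swapInCopy_adj i a h, swapInCopy_adj i a⟩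

lemma swapInCopy_of_notMem_copy {i : ℕ} (a : ℕ → Fin n) {u : GnVertex n} (hu : u ∉ copy n i) :
    swapInCopy i a u = u := by
  rcases u with k | ⟨⟨j, d, w⟩, h⟩
  · rfl
  · have hj : j ≠ i := fun hj => hu ⟨_, rfl, hj⟩
    simp only [swapInCopy, Sum.inr.injEq, Subtype.mk.injEq, Prod.mk.injEq, true_and]
    funext m
    simp [swapWord, hj]

def padWord {i : ℕ} (b : Fin i → Fin n) (m : ℕ) : Fin n :=
  if h : m < i then b ⟨m, h⟩ else 0

def leaf {i : ℕ} (hi : 1 ≤ i) (b : Fin i → Fin n) : GnVertex n :=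
  Sum.inr ⟨(i, i, padWord b), hi, le_rfl, fun m hm => by simp [padWord, hm.not_gt]⟩

lemma leaf_injective {i : ℕ} (hi : 1 ≤ i) : Function.Injective (leaf (n := n) hi) := by
  intro b b' h
  simp only [leaf, Sum.inr.injEq, Subtype.mk.injEq, Prod.mk.injEq, true_and] at h
  funext m
  simpa [padWord] using congrFun h m

lemma leaf_mem_copy {i : ℕ} (hi : 1 ≤ i) (b : Fin i → Fin n) : leaf hi b ∈ copy n i :=
  ⟨_, rfl, rfl⟩

lemma swapInCopy_leaf_zero {i : ℕ} (hi : 1 ≤ i) (b : Fin i → Fin n) :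
    swapInCopy i (padWord b) (leaf hi 0) = leaf hi b := by
  simp only [leaf, swapInCopy, Sum.inr.injEq, Subtype.mk.injEq, Prod.mk.injEq, true_and]
  funext m
  by_cases hm : m < i <;> simp [swapWord, padWord, hm]

lemma dist_leaf_of_notMem_copy {i : ℕ} (hi : 1 ≤ i) (b : Fin i → Fin n) {u : GnVertex n}
    (hu : u ∉ copy n i) : (GnGraph n).dist (leaf hi b) u = (GnGraph n).dist (leaf hi 0) u := by
  have h := (swapIso i (padWord b)).dist_map (leaf hi 0) u
  rwa [swapIso, RelIso.coe_fn_mk, Function.Involutive.coe_toPerm, swapInCopy_leaf_zero,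
    swapInCopy_of_notMem_copy _ hu] at h

lemma pow_le_of_injective_distClass {t : ℕ} (c : GnVertex n → Fin t)
    (hc : Function.Injective (distClass (GnGraph n) c)) {i : ℕ} (hi : 1 ≤ i) :
    n ^ i ≤ (2 * i + 2) ^ t := by
  have h := card_le_of_injective_distClass c (x := leaf hi) (copy n i) (2 * i)
    (fun b _ hu => dist_le_of_mem_copy (leaf_mem_copy hi b) hu)
    (fun b b' _ hu => (dist_leaf_of_notMem_copy hi b hu).trans
      (dist_leaf_of_notMem_copy hi b' hu).symm)
    (hc.comp (leaf_injective hi))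
  simpa using h

end GnGraph

lemma exists_two_mul_add_two_pow_lt_two_pow (t : ℕ) : ∃ i, 1 ≤ i ∧ (2 * i + 2) ^ t < 2 ^ i := by
  refine ⟨(t + 2) ^ 3, Nat.one_le_pow _ _ (by omega), ?_⟩
  have hbase : 2 * (t + 2) ^ 3 + 2 ≤ 2 ^ (3 * t + 5) := by
    have hcube : (t + 2) ^ 3 ≤ 2 ^ (3 * t + 3) := calc
      (t + 2) ^ 3 ≤ (2 ^ (t + 1)) ^ 3 := Nat.pow_le_pow_left Nat.lt_two_pow_self 3
      _ = 2 ^ (3 * t + 3) := by ring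
    have hsplit : 2 ^ (3 * t + 5) = 4 * 2 ^ (3 * t + 3) := by ring
    have hpos : 1 ≤ (t + 2) ^ 3 := Nat.one_le_pow _ _ (by omega)
    omega
  calc (2 * (t + 2) ^ 3 + 2) ^ t ≤ (2 ^ (3 * t + 5)) ^ t := Nat.pow_le_pow_left hbase t
    _ = 2 ^ ((3 * t + 5) * t) := by rw [← pow_mul]
    _ < 2 ^ ((t + 2) ^ 3) :=
      Nat.pow_lt_pow_right one_lt_two (by ring_nf; nlinarith [Nat.zero_le (t ^ 3)])

theorem stmt_15 (n : ℕ) (hn : 2 ≤ n) :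
    ¬ ∃ (t : ℕ) (c : GnVertex n → Fin t), IsLocatingColoring (GnGraph n) c := by
  have : NeZero n := ⟨by omega⟩
  rintro ⟨t, c, -, hinj⟩
  obtain ⟨i, hi, hlt⟩ := exists_two_mul_add_two_pow_lt_two_pow t
  have hle := GnGraph.pow_le_of_injective_distClass c hinj hi
  have := Nat.pow_le_pow_left hn i
  omega
end

section
/- For every bounded-degree tree T (finite or infinite) with maximum degree Δ: if the pruned tree f(T), obtained by deleting all end-path vertices except branch vertices, has finite locating chromatic number m, then T has a locating (m+Δ)-coloring; hence χ_L(T) ≤ χ_L(f(T)) + Δ. -/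
open Set

/-- A branch vertex: a vertex of degree at least 3. -/
def IsBranch {V : Type*} (G : SimpleGraph V) (v : V) : Prop :=
  3 ≤ (G.neighborSet v).ncard

/-- The vertices kept by the pruning operation `f`: branch vertices, vertices lying
on a path between two branch vertices, and everything if there is no branch vertex
(so all end-path vertices except branch vertices are removed). -/
def pruneKeep {V : Type*} (G : SimpleGraph V) : Set V :=
  {v | IsBranch G v ∨
    (∃ (b₁ b₂ : V) (p : G.Walk b₁ b₂), IsBranch G b₁ ∧ IsBranch G b₂ ∧
      p.IsPath ∧ v ∈ p.support) ∨
    (∀ b, ¬ IsBranch G b)}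

/-- The pruned tree `f(T)`: the subgraph induced on the kept vertices. -/
def prune {V : Type*} (G : SimpleGraph V) : SimpleGraph (pruneKeep G) :=
  G.induce (pruneKeep G)

/-!
Let `K` be the set of vertices kept by the pruning. It is convex in the tree, so every vertex `v`
has a gate: the end of the unique path from `v` that meets `K` only at its end. Off `K` the tree
has no branching, so the vertices outside `K` form paths hanging from `K`, and such a vertex is
determined by its gate, the first edge of its hanging path and its distance `d v` to the gate.

Keep the colouring of `f(T)` on `K`; give a vertex at even distance the colour of its gate, and a
vertex at odd distance a new colour determined injectively by the first edge of its hanging path.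
Two colours are thus attached to the hanging path of `v`; their entries in the code of `v` are
`0` and `1` and record the parity of `d v`, while every other colour class is seen from `v`
through its gate, so those entries are the entries of the code of the gate shifted by `d v`.
Comparing two equal codes recovers in turn the parity, the pair of attached colours, the distance
(using a third colour that occurs next to the gate), the gate itself (by the locating property of
the colouring of `f(T)`) and finally the vertex.
-/

lemma Fin.castAdd_ne_natAdd {m n : ℕ} (i : Fin m) (j : Fin n) :
    Fin.castAdd n i ≠ Fin.natAdd m j := by
  rw [Ne, Fin.ext_iff, Fin.val_castAdd, Fin.val_natAdd]
  omega

lemma Set.InjOn.exists_ne_of_one_lt_ncard {α β : Type*} {f : α → β} {s : Set α}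
    (hf : Set.InjOn f s) (hs : 1 < s.ncard) (b : β) : ∃ a ∈ s, f a ≠ b := by
  obtain ⟨a₁, ha₁⟩ := Set.nonempty_of_ncard_ne_zero (by omega : s.ncard ≠ 0)
  obtain ⟨a₂, ha₂, hne⟩ := Set.exists_ne_of_one_lt_ncard hs a₁
  by_cases h : f a₁ = b
  · exact ⟨a₂, ha₂, fun h₂ => hne (hf ha₂ ha₁ (h₂.trans h.symm))⟩
  · exact ⟨a₁, ha₁, h⟩

section DistClass

variable {V : Type*} {G : SimpleGraph V} {t : ℕ} {c : V → Fin t} {v x : V} {i : Fin t}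

lemma distClass_le (v : V) (h : c x = i) : distClass G c v i ≤ G.dist v x :=
  Nat.sInf_le ⟨x, h, rfl⟩

lemma exists_distClass_eq (v : V) (h : ∃ x, c x = i) :
    ∃ x, c x = i ∧ G.dist v x = distClass G c v i := by
  obtain ⟨x, hx⟩ := h
  exact Nat.sInf_mem (⟨G.dist v x, x, hx, rfl⟩ : {m | ∃ x, c x = i ∧ G.dist v x = m}.Nonempty)

lemma distClass_eq_zero_of_forall_ne (v : V) (h : ∀ x, c x ≠ i) : distClass G c v i = 0 := by
  have : {m | ∃ x, c x = i ∧ G.dist v x = m} = ∅ :=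
    Set.eq_empty_of_forall_notMem fun _ ⟨x, hx, _⟩ => h x hx
  rw [distClass, this, Nat.sInf_empty]

lemma exists_of_distClass_ne_zero (h : distClass G c v i ≠ 0) : ∃ x, c x = i := by
  by_contra hne
  exact h (distClass_eq_zero_of_forall_ne v (not_exists.mp hne))

lemma distClass_self_s16 (h : c v = i) : distClass G c v i = 0 :=
  Nat.le_zero.mp (by simpa using distClass_le (G := G) v h)

lemma distClass_eq_zero_iff (hG : G.Connected) (hne : ∃ x, c x = i) :
    distClass G c v i = 0 ↔ c v = i := by
  refine ⟨fun h0 => ?_, distClass_self_s16⟩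
  obtain ⟨x, hx, hd⟩ := exists_distClass_eq (G := G) v hne
  rwa [((hG v x).dist_eq_zero_iff.mp (hd.trans h0))]

lemma distClass_eq_one (hG : G.Connected) (hx : c x = i) (hadj : G.Adj v x) (hv : c v ≠ i) :
    distClass G c v i = 1 := by
  refine le_antisymm ((distClass_le v hx).trans (SimpleGraph.dist_eq_one_iff_adj.mpr hadj).le) ?_
  exact Nat.one_le_iff_ne_zero.mpr fun h0 => hv ((distClass_eq_zero_iff hG ⟨x, hx⟩).mp h0)

lemma distClass_eq_add {b : V} {k : ℕ} (hne : ∃ x, c x = i)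
    (h : ∀ x, c x = i → G.dist v x = k + G.dist b x) :
    distClass G c v i = k + distClass G c b i := by
  obtain ⟨x, hx, hxd⟩ := exists_distClass_eq (G := G) b hne
  obtain ⟨y, hy, hyd⟩ := exists_distClass_eq (G := G) v hne
  have h1 := distClass_le (G := G) v hx
  have h2 := distClass_le (G := G) b hy
  have h3 := h x hx
  have h4 := h y hy
  omega

end DistClass

namespace SimpleGraph

variable {V : Type*} {G : SimpleGraph V} {K : Set V}

lemma IsAcyclic.eq_of_isPath (hG : G.IsAcyclic) {u v : V} {p q : G.Walk u v} (hp : p.IsPath)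
    (hq : q.IsPath) : p = q :=
  congrArg Subtype.val ((hG.subsingleton_path u v).elim ⟨p, hp⟩ ⟨q, hq⟩)

lemma IsAcyclic.length_eq_dist (hG : G.IsAcyclic) {u v : V} {p : G.Walk u v} (hp : p.IsPath) :
    p.length = G.dist u v := by
  obtain ⟨q, hq, hlen⟩ := p.reachable.exists_path_of_dist
  rw [← hlen, hG.eq_of_isPath hp hq]

lemma Walk.IsPath.append {u v w : V} {p : G.Walk u v} {q : G.Walk v w} (hp : p.IsPath)
    (hq : q.IsPath) (h : ∀ x ∈ p.support, x ∈ q.support → x = v) : (p.append q).IsPath := by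
  rw [Walk.isPath_def, Walk.support_append, List.nodup_append]
  have hqn := hq.support_nodup
  refine ⟨hp.support_nodup, hqn.tail, fun x hx y hy hxy => ?_⟩
  subst hxy
  obtain rfl := h x hx (List.mem_of_mem_tail hy)
  rw [← q.cons_tail_support] at hqn
  exact (List.nodup_cons.mp hqn).1 hy

/-- In a tree this is the usual convexity (connectedness) of a set of vertices. -/
def IsPathConvex (G : SimpleGraph V) (K : Set V) : Prop :=
  ∀ ⦃x y : V⦄ (p : G.Walk x y), p.IsPath → x ∈ K → y ∈ K → ∀ z ∈ p.support, z ∈ K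

structure IsSubtree (G : SimpleGraph V) (K : Set V) : Prop where
  connected : G.Connected
  isAcyclic : G.IsAcyclic
  nonempty : K.Nonempty
  isPathConvex : G.IsPathConvex K

def Walk.IsGatePath (K : Set V) {v b : V} (q : G.Walk v b) : Prop :=
  q.IsPath ∧ b ∈ K ∧ ∀ z ∈ q.support, z ∈ K → z = b

lemma Walk.exists_isGatePath {v w : V} (p : G.Walk v w) (hw : w ∈ K) :
    ∃ b, ∃ q : G.Walk v b, q.IsGatePath K := by
  classical
  suffices ∃ b, ∃ q : G.Walk v b, b ∈ K ∧ ∀ z ∈ q.support, z ∈ K → z = b by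
    obtain ⟨b, q, hb, hq⟩ := this
    exact ⟨b, q.bypass, q.bypass_isPath, hb,
      fun z hz => hq z (q.support_bypass_subset_support hz)⟩
  induction p with
  | nil => exact ⟨_, .nil, hw, by simp⟩
  | @cons u _ _ h p ih =>
    by_cases hu : u ∈ K
    · exact ⟨u, .nil, hu, by simp⟩
    · obtain ⟨b, q, hb, hq⟩ := ih hw
      refine ⟨b, .cons h q, hb, fun z hz hzK => ?_⟩
      rcases List.mem_cons.mp (Walk.support_cons h q ▸ hz) with rfl | hz
      · exact absurd hzK hu
      · exact hq z hz hzK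

lemma Walk.IsGatePath.dropUntil [DecidableEq V] {v b z : V} {q : G.Walk v b}
    (hq : q.IsGatePath K) (hz : z ∈ q.support) : (q.dropUntil z hz).IsGatePath K :=
  ⟨hq.1.dropUntil hz, hq.2.1, fun x hx => hq.2.2 x (q.support_dropUntil_subset_support hz hx)⟩

/-- Gate paths from `v` all end at the same vertex: the path between two candidate ends
stays in `K`, so it prolongs the first gate path to a path, which must be the second. -/
lemma Walk.IsGatePath.sigma_eq (hG : G.IsAcyclic) (hK : G.IsPathConvex K) {v b b' : V}
    {q : G.Walk v b} {q' : G.Walk v b'} (hq : q.IsGatePath K) (hq' : q'.IsGatePath K) :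
    (⟨b, q⟩ : Σ b, G.Walk v b) = ⟨b', q'⟩ := by
  classical
  have hbb' : b = b' := by
    set r := (q.reverse.append q').bypass
    have hr : ∀ z ∈ r.support, z ∈ K := hK r (bypass_isPath _) hq.2.1 hq'.2.1
    have hqr : (q.append r).IsPath :=
      hq.1.append (bypass_isPath _) fun x hx hxr => hq.2.2 x hx (hr x hxr)
    have : q.append r = q' := hG.eq_of_isPath hqr hq'.1
    exact hq'.2.2 b (this ▸ q.support_subset_support_append_left r q.end_mem_support) hq.2.1
  subst hbb'
  rw [hG.eq_of_isPath hq.1 hq'.1]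

/-- A path from `v` meeting `K` exactly at its end; the trivial walk when there is none. -/
noncomputable def gateWalk (G : SimpleGraph V) (K : Set V) (v : V) : Σ b, G.Walk v b :=
  @Classical.epsilon _ ⟨⟨v, .nil⟩⟩ fun q => q.2.IsGatePath K

noncomputable def gate (G : SimpleGraph V) (K : Set V) (v : V) : V := (G.gateWalk K v).1

noncomputable def gatePath (G : SimpleGraph V) (K : Set V) (v : V) : G.Walk v (G.gate K v) :=
  (G.gateWalk K v).2

noncomputable def gateDist (G : SimpleGraph V) (K : Set V) (v : V) : ℕ :=
  (G.gatePath K v).length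

/-- The neighbour of the gate on the way to `v` (equal to `v` when `v ∈ K`). -/
noncomputable def gateNeighbor (G : SimpleGraph V) (K : Set V) (v : V) : V :=
  (G.gatePath K v).penultimate

lemma Walk.IsGatePath.gateWalk_eq (hG : G.IsAcyclic) (hK : G.IsPathConvex K) {v b : V}
    {q : G.Walk v b} (hq : q.IsGatePath K) : G.gateWalk K v = ⟨b, q⟩ :=
  Walk.IsGatePath.sigma_eq hG hK
    (Classical.epsilon_spec (p := fun q : Σ b, G.Walk v b => q.2.IsGatePath K) ⟨⟨b, q⟩, hq⟩) hq

lemma Walk.IsGatePath.gate_eq (hG : G.IsAcyclic) (hK : G.IsPathConvex K) {v b : V}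
    {q : G.Walk v b} (hq : q.IsGatePath K) : G.gate K v = b := by
  rw [gate, hq.gateWalk_eq hG hK]

lemma Walk.IsGatePath.gateDist_eq (hG : G.IsAcyclic) (hK : G.IsPathConvex K) {v b : V}
    {q : G.Walk v b} (hq : q.IsGatePath K) : G.gateDist K v = q.length :=
  congrArg (fun s : Σ b, G.Walk v b => s.2.length) (hq.gateWalk_eq hG hK)

lemma Walk.IsGatePath.gateNeighbor_eq (hG : G.IsAcyclic) (hK : G.IsPathConvex K) {v b : V}
    {q : G.Walk v b} (hq : q.IsGatePath K) : G.gateNeighbor K v = q.penultimate :=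
  congrArg (fun s : Σ b, G.Walk v b => s.2.penultimate) (hq.gateWalk_eq hG hK)

lemma Walk.isGatePath_nil {v : V} (hv : v ∈ K) : (Walk.nil : G.Walk v v).IsGatePath K :=
  ⟨.nil, hv, by simp⟩

lemma isGatePath_gatePath (hG : G.Connected) (hK : K.Nonempty) (v : V) :
    (G.gatePath K v).IsGatePath K := by
  obtain ⟨k, hk⟩ := hK
  obtain ⟨b, q, hq⟩ := (hG.preconnected v k).some.exists_isGatePath hk
  exact Classical.epsilon_spec (p := fun q : Σ b, G.Walk v b => q.2.IsGatePath K) ⟨⟨b, q⟩, hq⟩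

lemma adj_gateNeighbor_gate {v : V} (h : 0 < G.gateDist K v) :
    G.Adj (G.gateNeighbor K v) (G.gate K v) :=
  Walk.adj_penultimate (Walk.not_nil_iff_lt_length.mpr h)

lemma gateNeighbor_eq_self {v : V} (h : G.gateDist K v = 1) : G.gateNeighbor K v = v := by
  rw [gateNeighbor, Walk.penultimate, show (G.gatePath K v).length = 1 from h,
    Nat.sub_self, Walk.getVert_zero]

namespace IsSubtree

variable {u v z : V}

lemma gate_mem (hK : G.IsSubtree K) (v : V) : G.gate K v ∈ K :=
  (isGatePath_gatePath hK.connected hK.nonempty v).2.1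

lemma dist_gate (hK : G.IsSubtree K) (v : V) : G.dist v (G.gate K v) = G.gateDist K v :=
  (hK.isAcyclic.length_eq_dist (isGatePath_gatePath hK.connected hK.nonempty v).1).symm

lemma gate_eq_self (hK : G.IsSubtree K) (hv : v ∈ K) : G.gate K v = v :=
  (Walk.isGatePath_nil hv).gate_eq hK.isAcyclic hK.isPathConvex

lemma gateDist_eq_zero_iff (hK : G.IsSubtree K) : G.gateDist K v = 0 ↔ v ∈ K := by
  refine ⟨fun h => ?_, fun hv => ?_⟩
  · rw [Walk.eq_of_length_eq_zero h]
    exact hK.gate_mem v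
  · rw [(Walk.isGatePath_nil hv).gateDist_eq hK.isAcyclic hK.isPathConvex, Walk.length_nil]

lemma gateDist_pos_iff (hK : G.IsSubtree K) : 0 < G.gateDist K v ↔ v ∉ K := by
  rw [Nat.pos_iff_ne_zero, Ne, hK.gateDist_eq_zero_iff]

lemma gate_of_mem_support (hK : G.IsSubtree K) (hz : z ∈ (G.gatePath K v).support) :
    G.gate K z = G.gate K v := by
  classical
  exact ((isGatePath_gatePath hK.connected hK.nonempty v).dropUntil hz).gate_eq
    hK.isAcyclic hK.isPathConvex

lemma gateDist_add_dist_of_mem_support (hK : G.IsSubtree K)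
    (hz : z ∈ (G.gatePath K v).support) :
    G.gateDist K z + G.dist v z = G.gateDist K v := by
  classical
  have hq := isGatePath_gatePath hK.connected hK.nonempty v
  rw [(hq.dropUntil hz).gateDist_eq hK.isAcyclic hK.isPathConvex,
    ← hK.isAcyclic.length_eq_dist (hq.1.takeUntil hz), add_comm, ← Walk.length_append,
    Walk.take_spec, gateDist]

lemma gateNeighbor_of_mem_support (hK : G.IsSubtree K)
    (hz : z ∈ (G.gatePath K v).support) (hzb : z ≠ G.gate K v) :
    G.gateNeighbor K z = G.gateNeighbor K v := by
  classical
  have hq := isGatePath_gatePath hK.connected hK.nonempty v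
  have hne : ¬((G.gatePath K v).dropUntil z hz).Nil := Walk.not_nil_of_ne hzb
  rw [(hq.dropUntil hz).gateNeighbor_eq hK.isAcyclic hK.isPathConvex]
  exact hK.isAcyclic.eq_penultimate_of_adj_end hq.1 (Walk.adj_penultimate hne).symm
    ((G.gatePath K v).support_dropUntil_subset_support hz (Walk.getVert_mem_support _ _))

lemma exists_adj_toward_gate (hK : G.IsSubtree K) (h : 0 < G.gateDist K v) :
    ∃ u, G.Adj v u ∧ G.gate K u = G.gate K v ∧ G.gateDist K u + 1 = G.gateDist K v ∧
      (1 < G.gateDist K v → G.gateNeighbor K u = G.gateNeighbor K v) := by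
  set q := G.gatePath K v
  have hne : ¬q.Nil := Walk.not_nil_iff_lt_length.mpr h
  have hu : q.snd ∈ q.support := q.getVert_mem_support 1
  have hdist := hK.gateDist_add_dist_of_mem_support hu
  rw [dist_eq_one_iff_adj.mpr (q.adj_snd hne)] at hdist
  refine ⟨q.snd, q.adj_snd hne, hK.gate_of_mem_support hu, hdist, fun h1 => ?_⟩
  refine hK.gateNeighbor_of_mem_support hu fun hug => ?_
  have : G.gateDist K q.snd = 0 := hK.gateDist_eq_zero_iff.mpr (by rw [hug]; exact hK.gate_mem v)
  omega

lemma gate_eq_of_adj_of_not_mem (hK : G.IsSubtree K) (h : G.Adj u v) (hv : v ∉ K) :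
    G.gate K u = G.gate K v ∧
      (G.gateDist K u = G.gateDist K v + 1 ∨ G.gateDist K u + 1 = G.gateDist K v) := by
  have hq := isGatePath_gatePath hK.connected hK.nonempty v
  set q := G.gatePath K v
  by_cases hu : u ∈ q.support
  · have hdist := hK.gateDist_add_dist_of_mem_support hu
    rw [dist_eq_one_iff_adj.mpr h.symm] at hdist
    exact ⟨hK.gate_of_mem_support hu, Or.inr hdist⟩
  have huK : u ∉ K := by
    intro huK
    have hv1 : (Walk.cons h.symm .nil).IsGatePath K := by
      refine ⟨Walk.IsPath.nil.cons (by simpa using h.ne'), huK, fun x hx hxK => ?_⟩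
      simp only [Walk.support_cons, Walk.support_nil, List.mem_cons, List.not_mem_nil,
        or_false] at hx
      rcases hx with rfl | rfl
      · exact absurd hxK hv
      · rfl
    exact hu (hv1.gate_eq hK.isAcyclic hK.isPathConvex ▸ q.end_mem_support)
  have hcons : (Walk.cons h q).IsGatePath K := by
    refine ⟨hq.1.cons hu, hq.2.1, fun x hx hxK => ?_⟩
    rcases List.mem_cons.mp (Walk.support_cons h q ▸ hx) with rfl | hx
    · exact absurd hxK huK
    · exact hq.2.2 x hx hxK
  refine ⟨hcons.gate_eq hK.isAcyclic hK.isPathConvex, Or.inl ?_⟩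
  rw [hcons.gateDist_eq hK.isAcyclic hK.isPathConvex, Walk.length_cons]
  rfl

/-- The pair `(gate, gateNeighbor)` names the branch hanging from `K` that contains a vertex;
from outside its branch, `v` is reached through its gate. -/
lemma dist_eq_gateDist_add (hK : G.IsSubtree K)
    (h : G.gate K u ≠ G.gate K v ∨ G.gateNeighbor K u ≠ G.gateNeighbor K v) :
    G.dist v u = G.gateDist K v + G.dist (G.gate K v) u := by
  have hqv := isGatePath_gatePath hK.connected hK.nonempty v
  have hqu := isGatePath_gatePath hK.connected hK.nonempty u
  obtain ⟨s, hs, -⟩ := hK.connected.exists_path_of_dist (G.gate K v) (G.gate K u)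
  have hsK := hK.isPathConvex s hs (hK.gate_mem v) (hK.gate_mem u)
  have hX : (s.append (G.gatePath K u).reverse).IsPath :=
    hs.append hqu.1.reverse fun x hxs hxu =>
      hqu.2.2 x (by rwa [Walk.support_reverse, List.mem_reverse] at hxu) (hsK x hxs)
  have hW : ((G.gatePath K v).append (s.append (G.gatePath K u).reverse)).IsPath := by
    refine hqv.1.append hX fun x hxv hxX => ?_
    rcases (Walk.mem_support_append_iff _ _).mp hxX with hxs | hxu
    · exact hqv.2.2 x hxv (hsK x hxs)
    rw [Walk.support_reverse, List.mem_reverse] at hxu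
    by_contra hxg
    have hgate : G.gate K u = G.gate K v :=
      (hK.gate_of_mem_support hxu).symm.trans (hK.gate_of_mem_support hxv)
    refine h.elim (· hgate) (· ?_)
    rw [← hK.gateNeighbor_of_mem_support hxu (hgate ▸ hxg),
      hK.gateNeighbor_of_mem_support hxv hxg]
  rw [← hK.isAcyclic.length_eq_dist hW, ← hK.isAcyclic.length_eq_dist hX, Walk.length_append]
  rfl

/-- Induction on the distance: `u` and `v` are neighbours, further from the gate, of a common
vertex outside `K`, and such a vertex has at most two neighbours. -/
lemma eq_of_gate_eq (hK : G.IsSubtree K) (hleg : ∀ x ∉ K, (G.neighborSet x).encard ≤ 2)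
    (hg : G.gate K u = G.gate K v) (hn : G.gateNeighbor K u = G.gateNeighbor K v)
    (hd : G.gateDist K u = G.gateDist K v) : u = v := by
  induction hdu : G.gateDist K u generalizing u v with
  | zero =>
    have hu := hK.gateDist_eq_zero_iff.mp hdu
    have hv := hK.gateDist_eq_zero_iff.mp (hd ▸ hdu)
    rwa [hK.gate_eq_self hu, hK.gate_eq_self hv] at hg
  | succ n ih =>
    rcases Nat.eq_zero_or_pos n with rfl | hn0
    · exact (gateNeighbor_eq_self hdu).symm.trans (hn.trans (gateNeighbor_eq_self (by omega)))
    obtain ⟨u', hu', hgu, hdu', hnu⟩ := hK.exists_adj_toward_gate (v := u) (by omega)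
    obtain ⟨v', hv', hgv, hdv', hnv⟩ := hK.exists_adj_toward_gate (v := v) (by omega)
    obtain rfl : u' = v' := ih (by rw [hgu, hgv, hg])
      (by rw [hnu (by omega), hnv (by omega), hn]) (by omega) (by omega)
    obtain ⟨w, hw, -, hdw, -⟩ := hK.exists_adj_toward_gate (show 0 < G.gateDist K u' by omega)
    by_contra huv
    have h3 : ({w, u, v} : Set V).encard = 3 :=
      Set.encard_eq_three.mpr ⟨w, u, v, by rintro rfl; omega, by rintro rfl; omega, huv, rfl⟩
    have hsub : ({w, u, v} : Set V) ⊆ G.neighborSet u' := by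
      simp only [Set.insert_subset_iff, Set.singleton_subset_iff, mem_neighborSet]
      exact ⟨hw, hu'.symm, hv'.symm⟩
    have := (Set.encard_le_encard hsub).trans
      (hleg u' ((hK.gateDist_pos_iff).mp (by omega)))
    rw [h3] at this
    exact absurd this (by decide)

lemma dist_eq_gateDist_add_of_mem (hK : G.IsSubtree K) {w : V} (hw : w ∈ K) :
    G.dist v w = G.gateDist K v + G.dist (G.gate K v) w := by
  by_cases h : G.gate K v = w
  · rw [← h, dist_self, add_zero, hK.dist_gate]
  · exact hK.dist_eq_gateDist_add (Or.inl (by rwa [hK.gate_eq_self hw, ne_comm]))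

lemma dist_induce (hK : G.IsSubtree K) (x y : K) : (G.induce K).dist x y = G.dist x y := by
  obtain ⟨p, hp, hlen⟩ := hK.connected.exists_path_of_dist x y
  have hpK := hK.isPathConvex p hp x.2 y.2
  apply le_antisymm
  · calc (G.induce K).dist x y ≤ (p.induce K hpK).length := dist_le _
      _ = G.dist x y := by
        rw [← hlen, ← Walk.length_map (Embedding.induce K).toHom, Walk.map_induce]
        rfl
  · obtain ⟨w, hw⟩ := (p.induce K hpK).reachable.exists_walk_length_eq_dist
    calc G.dist x y ≤ (w.map (Embedding.induce K).toHom).length := dist_le _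
      _ = (G.induce K).dist x y := by rw [Walk.length_map, hw]

lemma exists_adj_mem (hK : G.IsSubtree K) (hu : u ∈ K) (hv : v ∈ K) (huv : u ≠ v) :
    ∃ w ∈ K, G.Adj u w := by
  obtain ⟨p, hp, -⟩ := hK.connected.exists_path_of_dist u v
  exact ⟨p.snd, hK.isPathConvex p hp hu hv _ (p.getVert_mem_support 1),
    p.adj_snd (Walk.not_nil_of_ne huv)⟩

end IsSubtree

section Prune

variable {b v : V}

lemma exists_isBranch_of_not_mem_pruneKeep (hv : v ∉ pruneKeep G) : ∃ b, IsBranch G b := by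
  by_contra h
  exact hv (Or.inr (Or.inr (not_exists.mp h)))

lemma pruneKeep_nonempty (hG : G.Connected) : (pruneKeep G).Nonempty := by
  obtain ⟨v⟩ := hG.nonempty
  by_cases hv : v ∈ pruneKeep G
  · exact ⟨v, hv⟩
  · obtain ⟨b, hb⟩ := exists_isBranch_of_not_mem_pruneKeep hv
    exact ⟨b, Or.inl hb⟩

/-- A vertex kept by the pruning lies on a path between two branch vertices, and so does every
vertex of the walk through those branch vertices that joins two kept vertices. -/
lemma isPathConvex_pruneKeep (hG : G.Connected) (hG' : G.IsAcyclic) :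
    G.IsPathConvex (pruneKeep G) := by
  classical
  intro x y p hp hx hy
  by_cases hbr : ∃ b, IsBranch G b
  swap
  · exact fun z _ => Or.inr (Or.inr (not_exists.mp hbr))
  have onBranchPath : ∀ {x}, x ∈ pruneKeep G → ∃ (b₁ b₂ : V) (P : G.Walk b₁ b₂),
      IsBranch G b₁ ∧ IsBranch G b₂ ∧ P.IsPath ∧ x ∈ P.support := by
    rintro x (h | h | h)
    · exact ⟨x, x, .nil, h, h, .nil, by simp⟩
    · exact h
    · exact absurd hbr (by simpa using h)
  obtain ⟨b₁, b₂, P, hb₁, hb₂, hP, hxP⟩ := onBranchPath hx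
  obtain ⟨b₃, b₄, Q, hb₃, hb₄, hQ, hyQ⟩ := onBranchPath hy
  obtain ⟨R, hR, -⟩ := hG.exists_path_of_dist b₁ b₃
  set W := (P.takeUntil x hxP).reverse.append (R.append (Q.takeUntil y hyQ))
  have hW : ∀ z ∈ W.support, z ∈ pruneKeep G := by
    intro z hz
    simp only [W, Walk.mem_support_append_iff, Walk.support_reverse, List.mem_reverse] at hz
    rcases hz with hz | hz | hz
    · exact Or.inr (Or.inl ⟨b₁, b₂, P, hb₁, hb₂, hP, P.support_takeUntil_subset_support _ hz⟩)
    · exact Or.inr (Or.inl ⟨b₁, b₃, R, hb₁, hb₃, hR, hz⟩)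
    · exact Or.inr (Or.inl ⟨b₃, b₄, Q, hb₃, hb₄, hQ, Q.support_takeUntil_subset_support _ hz⟩)
  rw [hG'.eq_of_isPath hp W.bypass_isPath]
  exact fun z hz => hW z (W.support_bypass_subset_support hz)

lemma isSubtree_pruneKeep (hG : G.Connected) (hG' : G.IsAcyclic) :
    G.IsSubtree (pruneKeep G) :=
  ⟨hG, hG', pruneKeep_nonempty hG, isPathConvex_pruneKeep hG hG'⟩

lemma encard_neighborSet_le_two (hfin : (G.neighborSet v).Finite) (hv : v ∉ pruneKeep G) :
    (G.neighborSet v).encard ≤ 2 := by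
  have : (G.neighborSet v).ncard ≤ 2 := by
    have : ¬IsBranch G v := fun h => hv (Or.inl h)
    rw [IsBranch] at this
    omega
  rw [← hfin.cast_ncard_eq]
  exact_mod_cast this

lemma isBranch_of_forall_mem_pruneKeep_eq (hv : v ∉ pruneKeep G)
    (hb : ∀ y ∈ pruneKeep G, y = b) : IsBranch G b := by
  obtain ⟨x, hx⟩ := exists_isBranch_of_not_mem_pruneKeep hv
  exact hb x (Or.inl hx) ▸ hx

end Prune

section ExtendColoring

variable {m Δ : ℕ} {c₀ : V → Fin m} {ν : V → V → Fin (m + Δ)} {u v x : V}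

noncomputable def extendColoring (G : SimpleGraph V) (K : Set V) (c₀ : V → Fin m)
    (ν : V → V → Fin (m + Δ)) (v : V) : Fin (m + Δ) :=
  if Even (G.gateDist K v) then Fin.castAdd Δ (c₀ (G.gate K v))
  else ν (G.gate K v) (G.gateNeighbor K v)

local notation "χ" => G.extendColoring K c₀ ν

lemma extendColoring_of_even (h : Even (G.gateDist K v)) : χ v = Fin.castAdd Δ (c₀ (G.gate K v)) :=
  if_pos h

lemma extendColoring_of_not_even (h : ¬Even (G.gateDist K v)) :
    χ v = ν (G.gate K v) (G.gateNeighbor K v) :=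
  if_neg h

lemma extendColoring_of_mem (hK : G.IsSubtree K) (hx : x ∈ K) : χ x = Fin.castAdd Δ (c₀ x) := by
  rw [extendColoring_of_even (by rw [hK.gateDist_eq_zero_iff.mpr hx]; exact Even.zero),
    hK.gate_eq_self hx]

lemma castAdd_ne_edgeColor (hν : ∀ b, Set.MapsTo (ν b) (G.neighborSet b) (Set.range (Fin.natAdd m)))
    (h : 0 < G.gateDist K v) (i : Fin m) :
    Fin.castAdd Δ i ≠ ν (G.gate K v) (G.gateNeighbor K v) := by
  obtain ⟨j, hj⟩ := hν _ (adj_gateNeighbor_gate h).symm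
  rw [← hj]
  exact Fin.castAdd_ne_natAdd i j

lemma extendColoring_eq_castAdd_iff
    (hν : ∀ b, Set.MapsTo (ν b) (G.neighborSet b) (Set.range (Fin.natAdd m))) {i : Fin m} :
    χ u = Fin.castAdd Δ i ↔ Even (G.gateDist K u) ∧ c₀ (G.gate K u) = i := by
  by_cases h : Even (G.gateDist K u)
  · rw [extendColoring_of_even h, (Fin.castAdd_injective m Δ).eq_iff]
    exact ⟨fun h' => ⟨h, h'⟩, And.right⟩
  · rw [extendColoring_of_not_even h]
    have hpos : 0 < G.gateDist K u := (Nat.not_even_iff_odd.mp h).pos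
    exact ⟨fun h' => absurd h'.symm (castAdd_ne_edgeColor hν hpos i), fun h' => absurd h'.1 h⟩

lemma distClass_extendColoring_eq_add (hK : G.IsSubtree K) {i : Fin (m + Δ)}
    (hi : ∃ x, χ x = i) (h₁ : i ≠ Fin.castAdd Δ (c₀ (G.gate K v)))
    (h₂ : i ≠ ν (G.gate K v) (G.gateNeighbor K v)) :
    distClass G χ v i = G.gateDist K v + distClass G χ (G.gate K v) i := by
  refine distClass_eq_add hi fun x hx => hK.dist_eq_gateDist_add ?_
  by_contra! hsame
  by_cases he : Even (G.gateDist K x)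
  · exact h₁ (by rw [← hx, extendColoring_of_even he, hsame.1])
  · exact h₂ (by rw [← hx, extendColoring_of_not_even he, hsame.1, hsame.2])

lemma gateDist_add_one_le_distClass (hK : G.IsSubtree K) {i : Fin (m + Δ)}
    (hi : ∃ x, χ x = i) (h₁ : i ≠ Fin.castAdd Δ (c₀ (G.gate K v)))
    (h₂ : i ≠ ν (G.gate K v) (G.gateNeighbor K v)) :
    G.gateDist K v + 1 ≤ distClass G χ v i := by
  rw [distClass_extendColoring_eq_add hK hi h₁ h₂]
  refine Nat.add_le_add_left (Nat.one_le_iff_ne_zero.mpr fun h0 => h₁ ?_) _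
  rw [← (distClass_eq_zero_iff hK.connected hi).mp h0, extendColoring_of_mem hK (hK.gate_mem v)]

lemma distClass_castAdd_gate (hK : G.IsSubtree K)
    (hν : ∀ b, Set.MapsTo (ν b) (G.neighborSet b) (Set.range (Fin.natAdd m))) :
    distClass G χ v (Fin.castAdd Δ (c₀ (G.gate K v))) =
      if Even (G.gateDist K v) then 0 else 1 := by
  by_cases he : Even (G.gateDist K v)
  · rw [if_pos he, distClass_self_s16 (extendColoring_of_even he)]
  have hpos : 0 < G.gateDist K v := (Nat.not_even_iff_odd.mp he).pos
  obtain ⟨w, hw, hgw, hdw, -⟩ := hK.exists_adj_toward_gate hpos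
  rw [if_neg he]
  have hew : Even (G.gateDist K w) := by rwa [← hdw, Nat.even_add_one, not_not] at he
  refine distClass_eq_one hK.connected ?_ hw ?_
  · rw [extendColoring_of_even hew, hgw]
  · rw [extendColoring_of_not_even he]
    exact (castAdd_ne_edgeColor hν hpos _).symm

lemma distClass_edgeColor (hK : G.IsSubtree K)
    (hν : ∀ b, Set.MapsTo (ν b) (G.neighborSet b) (Set.range (Fin.natAdd m)))
    (hpos : 0 < G.gateDist K v) :
    distClass G χ v (ν (G.gate K v) (G.gateNeighbor K v)) =
      if Even (G.gateDist K v) then 1 else 0 := by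
  by_cases he : Even (G.gateDist K v)
  swap
  · rw [if_neg he, distClass_self_s16 (extendColoring_of_not_even he)]
  rw [if_pos he]
  have h1 : 1 < G.gateDist K v := by
    obtain ⟨k, hk⟩ := he
    omega
  obtain ⟨w, hw, hgw, hdw, hnw⟩ := hK.exists_adj_toward_gate hpos
  have how : ¬Even (G.gateDist K w) := by rwa [← hdw, Nat.even_add_one] at he
  refine distClass_eq_one hK.connected ?_ hw ?_
  · rw [extendColoring_of_not_even how, hgw, hnw h1]
  · rw [extendColoring_of_even he]
    exact castAdd_ne_edgeColor hν hpos _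

/-- A vertex of colour `Fin.castAdd Δ i` outside `K` is farther from `x` than its gate, which
has the same colour. -/
lemma distClass_castAdd_of_mem (hK : G.IsSubtree K)
    (hν : ∀ b, Set.MapsTo (ν b) (G.neighborSet b) (Set.range (Fin.natAdd m)))
    (hx : x ∈ K) (i : Fin m) :
    distClass G χ x (Fin.castAdd Δ i) = distClass (G.induce K) (fun y => c₀ y) ⟨x, hx⟩ i := by
  by_cases hne : ∃ y : K, c₀ y = i
  swap
  · push Not at hne
    rw [distClass_eq_zero_of_forall_ne _ hne, distClass_eq_zero_of_forall_ne _ fun y hy =>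
      hne ⟨_, hK.gate_mem y⟩ ((extendColoring_eq_castAdd_iff hν).mp hy).2]
  apply le_antisymm
  · obtain ⟨y, hy, hyd⟩ := exists_distClass_eq (G := G.induce K) ⟨x, hx⟩ hne
    calc distClass G χ x (Fin.castAdd Δ i) ≤ G.dist x y :=
          distClass_le x (by rw [extendColoring_of_mem hK y.2, hy])
      _ = _ := by rw [← hyd, hK.dist_induce]
  · obtain ⟨y₀, hy₀⟩ := hne
    obtain ⟨y, hy, hyd⟩ := exists_distClass_eq (G := G) (c := χ) x
      ⟨y₀, by rw [extendColoring_of_mem hK y₀.2, hy₀]⟩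
    calc distClass (G.induce K) (fun y => c₀ y) ⟨x, hx⟩ i
        ≤ (G.induce K).dist ⟨x, hx⟩ ⟨_, hK.gate_mem y⟩ :=
          distClass_le _ ((extendColoring_eq_castAdd_iff hν).mp hy).2
      _ = G.dist x (G.gate K y) := hK.dist_induce _ _
      _ ≤ G.dist x y := by
        rw [dist_comm, dist_comm (u := x), hK.dist_eq_gateDist_add_of_mem (v := y) hx]
        omega
      _ = _ := hyd

lemma extendColoring_adj_ne (hK : G.IsSubtree K)
    (hν : ∀ b, Set.MapsTo (ν b) (G.neighborSet b) (Set.range (Fin.natAdd m)))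
    (hc₀ : ∀ x y : K, (G.induce K).Adj x y → c₀ x ≠ c₀ y) (h : G.Adj u v) : χ u ≠ χ v := by
  by_cases hK2 : u ∈ K ∧ v ∈ K
  · rw [extendColoring_of_mem hK hK2.1, extendColoring_of_mem hK hK2.2, Ne,
      (Fin.castAdd_injective m Δ).eq_iff]
    exact hc₀ ⟨u, hK2.1⟩ ⟨v, hK2.2⟩ h
  have hpar : ¬(Even (G.gateDist K u) ↔ Even (G.gateDist K v)) := by
    rcases not_and_or.mp hK2 with hu | hv
    · obtain ⟨-, hd | hd⟩ := hK.gate_eq_of_adj_of_not_mem h.symm hu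
      · rw [hd, Nat.even_add_one]; exact iff_not_self
      · rw [← hd, Nat.even_add_one]; exact not_iff_self
    · obtain ⟨-, hd | hd⟩ := hK.gate_eq_of_adj_of_not_mem h hv
      · rw [hd, Nat.even_add_one]; exact not_iff_self
      · rw [← hd, Nat.even_add_one]; exact iff_not_self
  intro hc
  by_cases hu : Even (G.gateDist K u)
  · exact hpar (iff_of_true hu ((extendColoring_eq_castAdd_iff hν).mp
      (hc.symm.trans (extendColoring_of_even hu))).1)
  by_cases hv : Even (G.gateDist K v)
  · exact hu ((extendColoring_eq_castAdd_iff hν).mp (hc.trans (extendColoring_of_even hv))).1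
  · exact hpar (iff_of_false hu hv)

lemma even_gateDist_of_distClass_eq (hK : G.IsSubtree K)
    (hν : ∀ b, Set.MapsTo (ν b) (G.neighborSet b) (Set.range (Fin.natAdd m)))
    (hcode : ∀ i, distClass G χ u i = distClass G χ v i) (hu : Even (G.gateDist K u)) :
    Even (G.gateDist K v) := by
  have h0 := distClass_castAdd_gate (c₀ := c₀) (ν := ν) (v := u) hK hν
  rw [if_pos hu, hcode, distClass_eq_zero_iff hK.connected
    ⟨_, extendColoring_of_mem hK (hK.gate_mem u)⟩] at h0
  exact ((extendColoring_eq_castAdd_iff hν).mp h0).1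

lemma edgeColor_eq_of_distClass_eq (hK : G.IsSubtree K)
    (hν : ∀ b, Set.MapsTo (ν b) (G.neighborSet b) (Set.range (Fin.natAdd m)))
    (hu : u ∉ K) (hv : v ∉ K) (hcode : ∀ i, distClass G χ u i = distClass G χ v i) :
    ν (G.gate K u) (G.gateNeighbor K u) = ν (G.gate K v) (G.gateNeighbor K v) := by
  have hpu := hK.gateDist_pos_iff.mpr hu
  have hpv := hK.gateDist_pos_iff.mpr hv
  have hedge := distClass_edgeColor (c₀ := c₀) hK hν hpu
  by_cases he : Even (G.gateDist K u)
  · rw [if_pos he, hcode] at hedge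
    by_contra hne
    have := gateDist_add_one_le_distClass hK
      (exists_of_distClass_ne_zero (ne_of_eq_of_ne hedge one_ne_zero))
      (castAdd_ne_edgeColor hν hpu _).symm hne
    omega
  · have hv' : ¬Even (G.gateDist K v) :=
      fun h => he (even_gateDist_of_distClass_eq hK hν (fun i => (hcode i).symm) h)
    rw [if_neg he, hcode, distClass_eq_zero_iff hK.connected ⟨u, extendColoring_of_not_even he⟩,
      extendColoring_of_not_even hv'] at hedge
    exact hedge.symm

lemma gateColor_eq_of_distClass_eq (hK : G.IsSubtree K)
    (hν : ∀ b, Set.MapsTo (ν b) (G.neighborSet b) (Set.range (Fin.natAdd m)))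
    (hv : v ∉ K) (hcode : ∀ i, distClass G χ u i = distClass G χ v i) :
    c₀ (G.gate K u) = c₀ (G.gate K v) := by
  by_contra hne
  have h1 := distClass_castAdd_gate (c₀ := c₀) (ν := ν) (v := u) hK hν
  rw [hcode] at h1
  have h2 := gateDist_add_one_le_distClass (v := v) hK
    ⟨_, extendColoring_of_mem hK (hK.gate_mem u)⟩ (fun h => hne (Fin.castAdd_injective m Δ h))
    (castAdd_ne_edgeColor hν (hK.gateDist_pos_iff.mpr hv) _)
  have := hK.gateDist_pos_iff.mpr hv
  split_ifs at h1 <;> omega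

/-- Away from the colour of the gates, the codes of `u` and `v` are those of their gates shifted
by the same distance, so the gates have the same code in `G.induce K`. -/
lemma gate_eq_of_distClass_eq (hK : G.IsSubtree K)
    (hν : ∀ b, Set.MapsTo (ν b) (G.neighborSet b) (Set.range (Fin.natAdd m)))
    (hc₀ : Function.Injective fun x : K => distClass (G.induce K) (fun y => c₀ y) x)
    (hu : u ∉ K) (hcol : c₀ (G.gate K u) = c₀ (G.gate K v))
    (hd : G.gateDist K u = G.gateDist K v) (hcode : ∀ i, distClass G χ u i = distClass G χ v i) :
    G.gate K u = G.gate K v := by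
  refine congrArg Subtype.val (@hc₀ ⟨_, hK.gate_mem u⟩ ⟨_, hK.gate_mem v⟩ (funext fun i => ?_))
  beta_reduce
  by_cases hi : c₀ (G.gate K u) = i
  · rw [distClass_self_s16 (c := fun y : K => c₀ y) hi,
      distClass_self_s16 (c := fun y : K => c₀ y) (hcol ▸ hi)]
  by_cases hne : ∃ y : K, c₀ y = i
  swap
  · push Not at hne
    exact (distClass_eq_zero_of_forall_ne _ hne).trans (distClass_eq_zero_of_forall_ne _ hne).symm
  obtain ⟨y, hy⟩ := hne
  have hpres : ∃ x, χ x = Fin.castAdd Δ i := ⟨y, by rw [extendColoring_of_mem hK y.2, hy]⟩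
  have hpu := hK.gateDist_pos_iff.mpr hu
  have h1 := distClass_extendColoring_eq_add hK hpres
    (fun h => hi (Fin.castAdd_injective m Δ h).symm) (castAdd_ne_edgeColor hν hpu i)
  have h2 := distClass_extendColoring_eq_add (v := v) hK hpres
    (fun h => hi ((Fin.castAdd_injective m Δ h).trans hcol.symm).symm)
    (castAdd_ne_edgeColor hν (hd ▸ hpu) i)
  rw [← distClass_castAdd_of_mem hK hν, ← distClass_castAdd_of_mem hK hν]
  have := hcode (Fin.castAdd Δ i)
  omega

lemma eq_of_distClass_eq_of_mem (hK : G.IsSubtree K)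
    (hν : ∀ b, Set.MapsTo (ν b) (G.neighborSet b) (Set.range (Fin.natAdd m)))
    (hc₀ : Function.Injective fun x : K => distClass (G.induce K) (fun y => c₀ y) x)
    (hu : u ∈ K) (hv : v ∈ K) (hcode : distClass G χ u = distClass G χ v) : u = v :=
  congrArg Subtype.val (@hc₀ ⟨u, hu⟩ ⟨v, hv⟩ (funext fun i => by
    beta_reduce
    rw [← distClass_castAdd_of_mem hK hν hu, ← distClass_castAdd_of_mem hK hν hv, hcode]))

lemma exists_injOn_neighborSet [Nonempty (Fin (m + Δ))]
    (hdeg : ∀ v, (G.neighborSet v).Finite ∧ (G.neighborSet v).ncard ≤ Δ) :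
    ∃ ν : V → V → Fin (m + Δ), (∀ b, Set.MapsTo (ν b) (G.neighborSet b)
      (Set.range (Fin.natAdd m))) ∧ ∀ b, Set.InjOn (ν b) (G.neighborSet b) := by
  have (b : V) : ∃ f : V → Fin (m + Δ), G.neighborSet b ⊆ f ⁻¹' Set.range (Fin.natAdd m) ∧
      Set.InjOn f (G.neighborSet b) := by
    refine (hdeg b).1.exists_injOn_of_encard_le ?_
    rw [← (hdeg b).1.cast_ncard_eq, ← Set.image_univ, (Fin.natAdd_injective Δ m).encard_image]
    simpa using (hdeg b).2
  choose ν hν hνinj using this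
  exact ⟨ν, hν, hνinj⟩

end ExtendColoring

section PruneColoring

variable {m Δ : ℕ} {c₀ : V → Fin m} {ν : V → V → Fin (m + Δ)} {u v x : V}

local notation "χ" => G.extendColoring (pruneKeep G) c₀ ν

/-- The colour of a kept neighbour of `b` or, when `b` is the only kept vertex (hence a branch
vertex), of one of its pendant neighbours. -/
lemma exists_distClass_eq_one (hK : G.IsSubtree (pruneKeep G))
    (hν : ∀ b, Set.MapsTo (ν b) (G.neighborSet b) (Set.range (Fin.natAdd m)))
    (hνinj : ∀ b, Set.InjOn (ν b) (G.neighborSet b))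
    (hc₀ : ∀ x y : pruneKeep G, (G.induce (pruneKeep G)).Adj x y → c₀ x ≠ c₀ y) {b : V}
    (hb : b ∈ pruneKeep G) (hv : v ∉ pruneKeep G) {j : Fin (m + Δ)}
    (hj : j ∈ Set.range (Fin.natAdd m)) :
    ∃ i, i ≠ Fin.castAdd Δ (c₀ b) ∧ i ≠ j ∧ distClass G χ b i = 1 := by
  obtain ⟨j, rfl⟩ := hj
  by_cases hK1 : ∃ y ∈ pruneKeep G, y ≠ b
  · obtain ⟨y, hy, hyb⟩ := hK1
    obtain ⟨z, hz, hbz⟩ := hK.exists_adj_mem hb hy hyb.symm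
    have hcz : c₀ b ≠ c₀ z := hc₀ ⟨b, hb⟩ ⟨z, hz⟩ hbz
    refine ⟨Fin.castAdd Δ (c₀ z), fun h => hcz (Fin.castAdd_injective m Δ h).symm,
      Fin.castAdd_ne_natAdd _ _, distClass_eq_one hK.connected (extendColoring_of_mem hK hz) hbz ?_⟩
    rw [extendColoring_of_mem hK hb]
    exact fun h => hcz (Fin.castAdd_injective m Δ h)
  push Not at hK1
  have hbr := isBranch_of_forall_mem_pruneKeep_eq hv hK1
  obtain ⟨z, hbz, hzj⟩ := (hνinj b).exists_ne_of_one_lt_ncard (by rw [IsBranch] at hbr; omega)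
    (Fin.natAdd m j)
  have hz : z ∉ pruneKeep G := fun hz => (G.ne_of_adj hbz) (hK1 z hz).symm
  obtain ⟨hgz, hdz⟩ := hK.gate_eq_of_adj_of_not_mem hbz hz
  rw [hK.gate_eq_self hb] at hgz
  have hdz1 : G.gateDist (pruneKeep G) z = 1 := by
    rw [hK.gateDist_eq_zero_iff.mpr hb] at hdz
    omega
  have hcz : χ z = ν b z := by
    rw [extendColoring_of_not_even (by rw [hdz1]; decide), ← hgz, gateNeighbor_eq_self hdz1]
  obtain ⟨k, hk⟩ := hν b hbz
  refine ⟨ν b z, ?_, hzj, distClass_eq_one hK.connected hcz hbz ?_⟩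
  · rw [← hk]
    exact (Fin.castAdd_ne_natAdd _ _).symm
  · rw [extendColoring_of_mem hK hb, ← hk]
    exact Fin.castAdd_ne_natAdd _ _

lemma gateDist_le_of_distClass_eq (hK : G.IsSubtree (pruneKeep G))
    (hν : ∀ b, Set.MapsTo (ν b) (G.neighborSet b) (Set.range (Fin.natAdd m)))
    (hνinj : ∀ b, Set.InjOn (ν b) (G.neighborSet b))
    (hc₀ : ∀ x y : pruneKeep G, (G.induce (pruneKeep G)).Adj x y → c₀ x ≠ c₀ y)
    (hu : u ∉ pruneKeep G) (hcol : c₀ (G.gate (pruneKeep G) u) = c₀ (G.gate (pruneKeep G) v))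
    (hedge : ν (G.gate (pruneKeep G) u) (G.gateNeighbor (pruneKeep G) u) =
      ν (G.gate (pruneKeep G) v) (G.gateNeighbor (pruneKeep G) v))
    (hcode : ∀ i, distClass G χ u i = distClass G χ v i) :
    G.gateDist (pruneKeep G) v ≤ G.gateDist (pruneKeep G) u := by
  obtain ⟨i, h₁, h₂, h1⟩ := exists_distClass_eq_one hK hν hνinj hc₀ (hK.gate_mem u) hu
    (hν _ (adj_gateNeighbor_gate (hK.gateDist_pos_iff.mpr hu)).symm)
  have hi : ∃ x, χ x = i := exists_of_distClass_ne_zero (ne_of_eq_of_ne h1 one_ne_zero)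
  have hu' := distClass_extendColoring_eq_add hK hi h₁ h₂
  have hv' := gateDist_add_one_le_distClass (v := v) hK hi (hcol ▸ h₁) (hedge ▸ h₂)
  rw [hcode] at hu'
  omega

lemma distClass_ne_of_mem_of_not_mem (hK : G.IsSubtree (pruneKeep G))
    (hν : ∀ b, Set.MapsTo (ν b) (G.neighborSet b) (Set.range (Fin.natAdd m)))
    (hνinj : ∀ b, Set.InjOn (ν b) (G.neighborSet b))
    (hc₀ : ∀ x y : pruneKeep G, (G.induce (pruneKeep G)).Adj x y → c₀ x ≠ c₀ y)
    (hx : x ∈ pruneKeep G) (hv : v ∉ pruneKeep G) : distClass G χ x ≠ distClass G χ v := by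
  intro hcode
  have hpos := hK.gateDist_pos_iff.mpr hv
  have hev := even_gateDist_of_distClass_eq hK hν (congrFun hcode)
    (by rw [hK.gateDist_eq_zero_iff.mpr hx]; exact Even.zero)
  obtain ⟨i, -, h₂, h1⟩ := exists_distClass_eq_one hK hν hνinj hc₀ hx hv
    (hν _ (adj_gateNeighbor_gate hpos).symm)
  rw [congrFun hcode] at h1
  by_cases hi : i = Fin.castAdd Δ (c₀ (G.gate (pruneKeep G) v))
  · rw [hi, distClass_castAdd_gate hK hν, if_pos hev] at h1
    exact zero_ne_one h1
  · have := gateDist_add_one_le_distClass hK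
      (exists_of_distClass_ne_zero (ne_of_eq_of_ne h1 one_ne_zero)) hi h₂
    omega

lemma eq_of_distClass_eq_of_not_mem (hK : G.IsSubtree (pruneKeep G))
    (hfin : ∀ v, (G.neighborSet v).Finite)
    (hν : ∀ b, Set.MapsTo (ν b) (G.neighborSet b) (Set.range (Fin.natAdd m)))
    (hνinj : ∀ b, Set.InjOn (ν b) (G.neighborSet b))
    (hc₀ : IsLocatingColoring (G.induce (pruneKeep G)) fun x => c₀ x)
    (hu : u ∉ pruneKeep G) (hv : v ∉ pruneKeep G) (hcode : distClass G χ u = distClass G χ v) :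
    u = v := by
  have hcode' := congrFun hcode
  have hedge := edgeColor_eq_of_distClass_eq hK hν hu hv hcode'
  have hcol := gateColor_eq_of_distClass_eq hK hν hv hcode'
  have hd := le_antisymm
    (gateDist_le_of_distClass_eq hK hν hνinj hc₀.1 hv hcol.symm hedge.symm fun i => (hcode' i).symm)
    (gateDist_le_of_distClass_eq hK hν hνinj hc₀.1 hu hcol hedge hcode')
  have hg := gate_eq_of_distClass_eq hK hν hc₀.2 hu hcol hd hcode'
  have hn : G.gateNeighbor (pruneKeep G) u = G.gateNeighbor (pruneKeep G) v := by
    refine hνinj (G.gate (pruneKeep G) v) ?_ ?_ (hg ▸ hedge)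
    · rw [← hg]
      exact (adj_gateNeighbor_gate (hK.gateDist_pos_iff.mpr hu)).symm
    · exact (adj_gateNeighbor_gate (hK.gateDist_pos_iff.mpr hv)).symm
  exact hK.eq_of_gate_eq (fun x hx => encard_neighborSet_le_two (hfin x) hx) hg hn hd

theorem isLocatingColoring_extendColoring (hK : G.IsSubtree (pruneKeep G))
    (hfin : ∀ v, (G.neighborSet v).Finite) (hc₀ : IsLocatingColoring (prune G) fun x => c₀ x)
    (hν : ∀ b, Set.MapsTo (ν b) (G.neighborSet b) (Set.range (Fin.natAdd m)))
    (hνinj : ∀ b, Set.InjOn (ν b) (G.neighborSet b)) :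
    IsLocatingColoring G χ := by
  refine ⟨fun u v => extendColoring_adj_ne hK hν hc₀.1, fun u v huv => ?_⟩
  by_cases hu : u ∈ pruneKeep G <;> by_cases hv : v ∈ pruneKeep G
  · exact eq_of_distClass_eq_of_mem hK hν hc₀.2 hu hv huv
  · exact absurd huv (distClass_ne_of_mem_of_not_mem hK hν hνinj hc₀.1 hu hv)
  · exact absurd huv.symm (distClass_ne_of_mem_of_not_mem hK hν hνinj hc₀.1 hv hu)
  · exact eq_of_distClass_eq_of_not_mem hK hfin hν hνinj hc₀ hu hv huv

end PruneColoring

end SimpleGraph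

open SimpleGraph in
theorem stmt_16 {V : Type*} (G : SimpleGraph V)
    (hconn : G.Connected) (hacyc : G.IsAcyclic)
    (Δ : ℕ) (hdeg : ∀ v : V, (G.neighborSet v).Finite ∧ (G.neighborSet v).ncard ≤ Δ)
    (m : ℕ) (hm : ∃ c : pruneKeep G → Fin m, IsLocatingColoring (prune G) c) :
    ∃ c : V → Fin (m + Δ), IsLocatingColoring G c := by
  obtain ⟨c', hc'⟩ := hm
  obtain ⟨k, hk⟩ := pruneKeep_nonempty hconn
  obtain ⟨c₀, rfl⟩ : ∃ c₀ : V → Fin m, (fun x : pruneKeep G => c₀ x) = c' :=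
    ⟨Function.extend Subtype.val c' fun _ => c' ⟨k, hk⟩,
      funext fun x => Subtype.val_injective.extend_apply _ _ x⟩
  have : Nonempty (Fin (m + Δ)) := ⟨Fin.castAdd Δ (c₀ k)⟩
  obtain ⟨ν, hν, hνinj⟩ := exists_injOn_neighborSet (G := G) (m := m) hdeg
  exact ⟨_, isLocatingColoring_extendColoring (isSubtree_pruneKeep hconn hacyc)
    (fun v => (hdeg v).1) hc' hν hνinj⟩
end

section
/- If T is an infinite tree with bounded degree such that f^n(T) is a path (finite, one-way infinite, or two-way infinite) for some n ≥ 0, then T has finite locating chromatic number. -/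
open Set

/-- A vertex is a branch vertex within a set `s`: it has at least 3 neighbors in `s`. -/
def IsBranchIn {V : Type*} (G : SimpleGraph V) (s : Set V) (v : V) : Prop :=
  3 ≤ (G.neighborSet v ∩ s).ncard

/-- One application of the pruning operation `f`, acting on vertex subsets:
keep the branch vertices (relative to `s`), the vertices lying on a path inside `s`
between two branch vertices, and everything if `s` contains no branch vertex. -/
def pruneStep {V : Type*} (G : SimpleGraph V) (s : Set V) : Set V :=
  {v ∈ s | IsBranchIn G s v ∨
    (∃ (b₁ b₂ : V) (p : G.Walk b₁ b₂), IsBranchIn G s b₁ ∧ IsBranchIn G s b₂ ∧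
      p.IsPath ∧ (∀ x ∈ p.support, x ∈ s) ∧ v ∈ p.support) ∨
    (∀ b ∈ s, ¬ IsBranchIn G s b)}

/-- The induced subgraph on `s` is a path (finite, one-way infinite or two-way
infinite, possibly a single vertex): it is connected and every vertex has at
most two neighbors inside `s`. -/
def IsPathlike {V : Type*} (G : SimpleGraph V) (s : Set V) : Prop :=
  (G.induce s).Connected ∧
    ∀ v ∈ s, (G.neighborSet v ∩ s).Finite ∧ (G.neighborSet v ∩ s).ncard ≤ 2

open SimpleGraph

namespace S17

variable {V : Type*} {G : SimpleGraph V}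

/-- metric betweenness -/
def Btw (G : SimpleGraph V) (x m y : V) : Prop :=
  G.dist x m + G.dist m y = G.dist x y

lemma btw_symm (h : Btw G x m y) : Btw G y m x := by
  unfold Btw at *
  rw [dist_comm (u := y) (v := m), dist_comm (u := m) (v := x), dist_comm (u := y) (v := x)]
  omega

lemma btw_self_left : Btw G x x y := by simp [Btw]

lemma btw_trans_left (hc : G.Connected) (h1 : Btw G x m y) (h2 : Btw G x y z) :
    Btw G x m z := by
  have t1 := hc.dist_triangle (u := x) (v := m) (w := z)
  have t2 := hc.dist_triangle (u := m) (v := y) (w := z)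
  have t3 := hc.dist_triangle (u := m) (v := z) (w := y)
  unfold Btw at *
  have hzy : G.dist z y = G.dist y z := dist_comm
  omega

/-- from Btw x m y and Btw x y z conclude Btw m y z -/
lemma btw_trans_mid (hc : G.Connected) (h1 : Btw G x m y) (h2 : Btw G x y z) :
    Btw G m y z := by
  have t1 := hc.dist_triangle (u := m) (v := y) (w := z)
  have t2 := hc.dist_triangle (u := x) (v := m) (w := z)
  unfold Btw at *
  omega

/-- canonical geodesic between two vertices -/
noncomputable def cp (hc : G.Connected) (x y : V) : G.Walk x y :=
  (hc.exists_walk_length_eq_dist x y).choose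

lemma cp_length (hc : G.Connected) (x y : V) : (cp hc x y).length = G.dist x y :=
  (hc.exists_walk_length_eq_dist x y).choose_spec

lemma cp_isPath (hc : G.Connected) (x y : V) : (cp hc x y).IsPath :=
  (cp hc x y).isPath_of_length_eq_dist (cp_length hc x y)

lemma eq_cp (hc : G.Connected) (ha : G.IsAcyclic) {x y : V} (p : G.Walk x y)
    (hp : p.IsPath) : p = cp hc x y :=
  congrArg Subtype.val (ha.path_unique ⟨p, hp⟩ ⟨cp hc x y, cp_isPath hc x y⟩)

lemma btw_of_mem_cp (hc : G.Connected) {x y m : V} (hm : m ∈ (cp hc x y).support) :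
    Btw G x m y := by
  classical
  have hs := (cp hc x y).take_spec hm
  have hlen : ((cp hc x y).takeUntil m hm).length + ((cp hc x y).dropUntil m hm).length
      = G.dist x y := by
    have := congrArg Walk.length hs
    rwa [Walk.length_append, cp_length] at this
  have h1 : G.dist x m ≤ ((cp hc x y).takeUntil m hm).length := dist_le _
  have h2 : G.dist m y ≤ ((cp hc x y).dropUntil m hm).length := dist_le _
  have h3 := hc.dist_triangle (u := x) (v := m) (w := y)
  unfold Btw
  omega

lemma mem_cp_of_btw (hc : G.Connected) (ha : G.IsAcyclic) {x y m : V}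
    (h : Btw G x m y) : m ∈ (cp hc x y).support := by
  have hW : ((cp hc x m).append (cp hc m y)).length = G.dist x y := by
    rw [Walk.length_append, cp_length, cp_length]; exact h
  have hP : ((cp hc x m).append (cp hc m y)).IsPath :=
    Walk.isPath_of_length_eq_dist _ (by rw [hW])
  have he := eq_cp hc ha _ hP
  rw [← he, Walk.mem_support_append_iff]
  exact Or.inl (Walk.end_mem_support _)

/-- collinearity dichotomy -/
lemma btw_dichotomy (hc : G.Connected) (ha : G.IsAcyclic) {b a p q : V}
    (h1 : Btw G b p a) (h2 : Btw G b q a) : Btw G b q p ∨ Btw G b p q := by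
  classical
  have hp := mem_cp_of_btw hc ha h1
  have hq := mem_cp_of_btw hc ha h2
  have hs := (cp hc b a).take_spec hp
  rw [← hs, Walk.mem_support_append_iff] at hq
  rcases hq with hq | hq
  · left
    have hTP : ((cp hc b a).takeUntil p hp) = cp hc b p :=
      eq_cp hc ha _ ((cp_isPath hc b a).takeUntil hp)
    rw [hTP] at hq
    exact btw_of_mem_cp hc hq
  · right
    have hDP : ((cp hc b a).dropUntil p hp) = cp hc p a :=
      eq_cp hc ha _ ((cp_isPath hc b a).dropUntil hp)
    rw [hDP] at hq
    have h3 : Btw G p q a := btw_of_mem_cp hc hq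
    have t1 := hc.dist_triangle (u := b) (v := p) (w := q)
    have t2 := hc.dist_triangle (u := b) (v := q) (w := a)
    unfold Btw at *
    omega

lemma dist_pos_of_ne (hc : G.Connected) {x y : V} (h : x ≠ y) : 0 < G.dist x y := by
  rcases Nat.eq_zero_or_pos (G.dist x y) with h0 | h0
  · exact absurd (hc.dist_eq_zero_iff.mp h0) h
  · exact h0

lemma eq_of_dist_eq_zero (hc : G.Connected) {x y : V} (h : G.dist x y = 0) : x = y :=
  hc.dist_eq_zero_iff.mp h

/-- key disjointness lemma: if the geodesics x→y and y→z only share y,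
then dist adds up. -/
lemma btw_of_disjoint (hc : G.Connected) (ha : G.IsAcyclic) {x y z : V}
    (hd : ∀ a, a ∈ (cp hc x y).support → a ∈ (cp hc y z).support → a = y) :
    Btw G x y z := by
  classical
  set p := cp hc x y with hp
  set q := cp hc y z with hq
  have hnd : (p.append q).support.Nodup := by
    rw [Walk.support_append]
    refine List.Nodup.append (cp_isPath hc x y).support_nodup
      ((cp_isPath hc y z).support_nodup.tail) ?_
    intro a hap haq
    have haq' : a ∈ q.support := List.mem_of_mem_tail haq
    have hay : a = y := hd a hap haq'
    subst hay
    have hnodup := (cp_isPath hc a z).support_nodup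
    rw [q.support_eq_cons] at hnodup
    exact (List.nodup_cons.mp hnodup).1 haq
  have hP : (p.append q).IsPath := Walk.IsPath.mk' hnd
  have he := eq_cp hc ha _ hP
  have hlen : (p.append q).length = G.dist x z := by rw [he, cp_length]
  rw [Walk.length_append, cp_length, cp_length] at hlen
  exact hlen


lemma adj_dist_ne (hc : G.Connected) (ha : G.IsAcyclic) {u v : V} (h : G.Adj u v)
    (x : V) : G.dist u x ≠ G.dist v x := by
  intro heq
  by_cases hm : u ∈ (cp hc v x).support
  · have hb : Btw G v u x := btw_of_mem_cp hc hm
    have h1 : G.dist v u = 1 := dist_eq_one_iff_adj.mpr h.symm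
    unfold Btw at hb
    omega
  · have hP : (Walk.cons h (cp hc v x)).IsPath :=
      ((cp_isPath hc v x).cons hm)
    have he := eq_cp hc ha _ hP
    have := congrArg Walk.length he
    rw [Walk.length_cons, cp_length, cp_length] at this
    omega

lemma adj_dist_cases (hc : G.Connected) (ha : G.IsAcyclic) {u v : V} (h : G.Adj u v)
    (x : V) : G.dist u x = G.dist v x + 1 ∨ G.dist v x = G.dist u x + 1 := by
  have hne := adj_dist_ne hc ha h x
  have h1 : G.dist u v = 1 := dist_eq_one_iff_adj.mpr h
  have t1 := hc.dist_triangle (u := u) (v := v) (w := x)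
  have t2 := hc.dist_triangle (u := v) (v := u) (w := x)
  rw [dist_comm (u := v) (v := u)] at t2
  omega

lemma exists_first (hc : G.Connected) {v z : V} (h : G.dist v z ≠ 0) :
    ∃ F, G.Adj F z ∧ Btw G v F z := by
  set p := cp hc v z with hp
  have hl : p.length = G.dist v z := cp_length hc v z
  have hpos : 0 < p.length := by omega
  refine ⟨p.getVert (p.length - 1), ?_, ?_⟩
  · have := p.adj_getVert_succ (i := p.length - 1) (by omega)
    rw [show p.length - 1 + 1 = p.length by omega, p.getVert_length] at this
    exact this
  · apply btw_of_mem_cp hc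
    rw [← hp, Walk.mem_support_iff_exists_getVert]
    exact ⟨p.length - 1, rfl, by omega⟩

open Classical in
/-- the neighbor of `z` on the geodesic from `v` to `z` -/
noncomputable def fv (hc : G.Connected) (v z : V) : V :=
  if h : G.dist v z ≠ 0 then (exists_first hc h).choose else v

lemma fv_adj (hc : G.Connected) {v z : V} (h : G.dist v z ≠ 0) :
    G.Adj (fv hc v z) z := by
  rw [fv, dif_pos h]
  exact (exists_first hc h).choose_spec.1

lemma fv_btw (hc : G.Connected) {v z : V} (h : G.dist v z ≠ 0) :
    Btw G v (fv hc v z) z := by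
  rw [fv, dif_pos h]
  exact (exists_first hc h).choose_spec.2

lemma fv_dist (hc : G.Connected) {v z : V} (h : G.dist v z ≠ 0) :
    G.dist v (fv hc v z) + 1 = G.dist v z := by
  have h1 : G.dist (fv hc v z) z = 1 := dist_eq_one_iff_adj.mpr (fv_adj hc h)
  have h2 := fv_btw hc h
  unfold Btw at h2
  omega

lemma fv_unique (hc : G.Connected) (ha : G.IsAcyclic) {v z F : V} (h : G.dist v z ≠ 0)
    (hF : G.Adj F z) (hb : Btw G v F z) : F = fv hc v z := by
  have h1 : G.dist F z = 1 := dist_eq_one_iff_adj.mpr hF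
  have h2 : G.dist (fv hc v z) z = 1 := dist_eq_one_iff_adj.mpr (fv_adj hc h)
  have h3 := fv_btw hc h
  rcases btw_dichotomy hc ha hb h3 with hd | hd
  · unfold Btw at *
    have t := hc.dist_triangle (u := fv hc v z) (v := F) (w := z)
    have : G.dist (fv hc v z) F = 0 := by omega
    exact (eq_of_dist_eq_zero hc this).symm
  · unfold Btw at *
    have t := hc.dist_triangle (u := F) (v := fv hc v z) (w := z)
    have : G.dist F (fv hc v z) = 0 := by omega
    exact eq_of_dist_eq_zero hc this

lemma fv_self (hc : G.Connected) (ha : G.IsAcyclic) {v z : V} (hadj : G.Adj v z) :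
    fv hc v z = v := by
  have h : G.dist v z ≠ 0 := by
    rw [SimpleGraph.dist_eq_one_iff_adj.mpr hadj]
    omega
  exact (fv_unique hc ha h hadj (by simp [Btw, SimpleGraph.dist_self])).symm

/-- T2 : if the penultimate vertices of the geodesics from w and from x to z differ,
then z is between w and x -/
lemma btw_of_fv_ne (hc : G.Connected) (ha : G.IsAcyclic) {w x z : V}
    (hw : G.dist w z ≠ 0) (hx : G.dist x z ≠ 0)
    (hne : fv hc w z ≠ fv hc x z) : Btw G w z x := by
  have key : ∀ a, a ∈ (cp hc w z).support → a ∈ (cp hc z x).support → a = z := by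
    intro a haw hax
    by_contra hne'
    have hb1 : Btw G w a z := btw_of_mem_cp hc haw
    have hb2 : Btw G z a x := btw_of_mem_cp hc hax
    have hb2' : Btw G x a z := btw_symm hb2
    have haz : G.dist a z ≠ 0 := fun h0 => hne' (eq_of_dist_eq_zero hc h0)
    -- fv a z is the penultimate for both w and x
    have hkey : ∀ y : V, G.dist y z ≠ 0 → Btw G y a z → fv hc a z = fv hc y z := by
      intro y hy hbya
      apply fv_unique hc ha hy (fv_adj hc haz)
      have h1 := fv_btw hc haz
      have h2 := fv_dist hc haz
      have hdzfv : G.dist (fv hc a z) z = 1 := dist_eq_one_iff_adj.mpr (fv_adj hc haz)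
      have t1 := hc.dist_triangle (u := y) (v := a) (w := fv hc a z)
      have t2 := hc.dist_triangle (u := y) (v := fv hc a z) (w := z)
      unfold Btw at *
      omega
    have hfa1 : fv hc a z = fv hc w z := hkey w hw hb1
    have hfa2 : fv hc a z = fv hc x z := hkey x hx hb2'
    exact hne (hfa1 ▸ hfa2 ▸ rfl)
  exact btw_of_disjoint hc ha key

/-- convexity of a set of vertices -/
def Conv (G : SimpleGraph V) (C : Set V) : Prop :=
  ∀ x ∈ C, ∀ y ∈ C, ∀ m, Btw G x m y → m ∈ C

lemma exists_gate (hc : G.Connected) (ha : G.IsAcyclic) {C : Set V} (hC : Conv G C)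
    (hne : C.Nonempty) (v : V) :
    ∃ g ∈ C, ∀ x ∈ C, G.dist v x = G.dist v g + G.dist g x := by
  classical
  set S : Set ℕ := (fun x => G.dist v x) '' C with hS
  have hSne : S.Nonempty := hne.image _
  obtain ⟨g, hgC, hgd⟩ := Nat.sInf_mem hSne
  simp only [] at hgd
  refine ⟨g, hgC, fun x hx => ?_⟩
  have hdisj : ∀ a, a ∈ (cp hc v g).support → a ∈ (cp hc g x).support → a = g := by
    intro a hag hax
    by_contra hne'
    have hb1 : Btw G v a g := btw_of_mem_cp hc hag
    have hb2 : Btw G g a x := btw_of_mem_cp hc hax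
    have haC : a ∈ C := hC g hgC x hx a hb2
    have hlt : G.dist v a < G.dist v g := by
      have : G.dist a g ≠ 0 := fun h0 => hne' (eq_of_dist_eq_zero hc h0)
      unfold Btw at hb1
      omega
    have hle : sInf S ≤ G.dist v a := Nat.sInf_le ⟨a, haC, rfl⟩
    omega
  exact (btw_of_disjoint hc ha hdisj).symm


/-- T1 : if m is between x and y, and y is between b₃ and b₄, then
m is between x and one of b₃, b₄ -/
lemma btw_steiner (hc : G.Connected) (ha : G.IsAcyclic) {x y m b₃ b₄ : V}
    (h1 : Btw G x m y) (h2 : Btw G b₃ y b₄) :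
    Btw G x m b₃ ∨ Btw G x m b₄ := by
  classical
  by_cases hd3 : ∀ a, a ∈ (cp hc x y).support → a ∈ (cp hc y b₃).support → a = y
  · exact Or.inl (btw_trans_left hc h1 (btw_of_disjoint hc ha hd3))
  · right
    apply btw_trans_left hc h1
    apply btw_of_disjoint hc ha
    push_neg at hd3
    obtain ⟨a, hax, ha3, hay⟩ := hd3
    intro b hbx hb4
    by_contra hby
    have hba : Btw G x a y := btw_of_mem_cp hc hax
    have hba3 : Btw G y a b₃ := btw_of_mem_cp hc ha3
    have hbb : Btw G x b y := btw_of_mem_cp hc hbx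
    have hbb4 : Btw G y b b₄ := btw_of_mem_cp hc hb4
    have hday : G.dist a y ≠ 0 := fun h0 => hay (eq_of_dist_eq_zero hc h0)
    have hdby : G.dist b y ≠ 0 := fun h0 => hby (eq_of_dist_eq_zero hc h0)
    -- collinearity of a, b from y
    have hdi := btw_dichotomy hc ha (btw_symm hba) (btw_symm hbb)
    -- distance facts (common orientation)
    have c1 : G.dist y a = G.dist a y := dist_comm
    have c2 : G.dist y b = G.dist b y := dist_comm
    have c3 : G.dist b₃ a = G.dist a b₃ := dist_comm
    have c4 : G.dist b₃ y = G.dist y b₃ := dist_comm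
    have t1 : G.dist b₃ b₄ ≤ G.dist b₃ a + G.dist a b₄ := hc.dist_triangle
    have t2 : G.dist a b₄ ≤ G.dist a b + G.dist b b₄ := hc.dist_triangle
    have t3 : G.dist b₃ b₄ ≤ G.dist b₃ b + G.dist b b₄ := hc.dist_triangle
    have t4 : G.dist b₃ b ≤ G.dist b₃ a + G.dist a b := hc.dist_triangle
    have c5 : G.dist b a = G.dist a b := dist_comm
    unfold Btw at h2 hba3 hbb4
    rcases hdi with hyx | hyx <;> unfold Btw at hyx <;> omega

lemma pruneStep_subset (s : Set V) : pruneStep G s ⊆ s := fun _ hv => hv.1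

lemma mem_prune_of_pair (hc : G.Connected) (ha : G.IsAcyclic) {s : Set V} {b₁ b₂ m : V}
    (hbr1 : IsBranchIn G s b₁) (hbr2 : IsBranchIn G s b₂)
    (hsupp : ∀ a, Btw G b₁ a b₂ → a ∈ s) (hm : Btw G b₁ m b₂) :
    m ∈ pruneStep G s :=
  ⟨hsupp m hm, Or.inr (Or.inl ⟨b₁, b₂, cp hc b₁ b₂, hbr1, hbr2, cp_isPath hc b₁ b₂,
    fun x hx => hsupp x (btw_of_mem_cp hc hx), mem_cp_of_btw hc ha hm⟩)⟩

lemma mem_prune_pair (hc : G.Connected) (ha : G.IsAcyclic) {s : Set V} {x : V}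
    (hx : x ∈ pruneStep G s) (hbr : ∃ b ∈ s, IsBranchIn G s b) :
    ∃ b₁ b₂, b₁ ∈ s ∧ b₂ ∈ s ∧ IsBranchIn G s b₁ ∧ IsBranchIn G s b₂ ∧
      Btw G b₁ x b₂ ∧ (∀ a, Btw G b₁ a b₂ → a ∈ s) := by
  obtain ⟨hxs, hcl⟩ := hx
  rcases hcl with hb | hp | hno
  · refine ⟨x, x, hxs, hxs, hb, hb, btw_self_left, fun a hba => ?_⟩
    have : G.dist x a = 0 := by
      unfold Btw at hba
      have : G.dist x x = 0 := by simp
      have hcomm : G.dist a x = G.dist x a := dist_comm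
      omega
    rwa [← eq_of_dist_eq_zero hc this]
  · obtain ⟨b₁, b₂, p, hbr1, hbr2, hpp, hps, hxp⟩ := hp
    have hpe := eq_cp hc ha p hpp
    refine ⟨b₁, b₂, hps _ p.start_mem_support, hps _ p.end_mem_support, hbr1, hbr2,
      btw_of_mem_cp hc (hpe ▸ hxp), fun a hba => hps a ?_⟩
    rw [hpe]
    exact mem_cp_of_btw hc ha hba
  · obtain ⟨b, hbs, hbbr⟩ := hbr
    exact absurd hbbr (hno b hbs)

lemma conv_pruneStep (hc : G.Connected) (ha : G.IsAcyclic) {s : Set V}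
    (hs : Conv G s) : Conv G (pruneStep G s) := by
  intro x hx y hy m hbtw
  by_cases hbr : ∃ b ∈ s, IsBranchIn G s b
  · obtain ⟨b₁, b₂, hb₁s, hb₂s, hbr1, hbr2, hbx, _⟩ := mem_prune_pair hc ha hx hbr
    obtain ⟨b₃, b₄, hb₃s, hb₄s, hbr3, hbr4, hby, _⟩ := mem_prune_pair hc ha hy hbr
    have step1 : Btw G x m b₃ ∨ Btw G x m b₄ := btw_steiner hc ha hbtw hby
    have key : ∀ b', b' ∈ s → IsBranchIn G s b' → Btw G x m b' → m ∈ pruneStep G s := by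
      intro b' hb's hbrb' hxmb'
      have step2 : Btw G b' m b₁ ∨ Btw G b' m b₂ :=
        btw_steiner hc ha (btw_symm hxmb') hbx
      rcases step2 with h' | h'
      · exact mem_prune_of_pair hc ha hbrb' hbr1
          (fun a hba => hs b' hb's b₁ hb₁s a hba) h'
      · exact mem_prune_of_pair hc ha hbrb' hbr2
          (fun a hba => hs b' hb's b₂ hb₂s a hba) h'
    rcases step1 with h' | h'
    · exact key b₃ hb₃s hbr3 h'
    · exact key b₄ hb₄s hbr4 h'
  · push_neg at hbr
    exact ⟨hs x hx.1 y hy.1 m hbtw, Or.inr (Or.inr hbr)⟩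

lemma conv_iterate (hc : G.Connected) (ha : G.IsAcyclic) (k : ℕ) :
    Conv G ((pruneStep G)^[k] Set.univ) := by
  induction k with
  | zero => exact fun x _ y _ m _ => Set.mem_univ m
  | succ k ih =>
    rw [Function.iterate_succ_apply']
    exact conv_pruneStep hc ha ih


/-- distance to a color class, for arbitrary color type -/
noncomputable def codeCol (G : SimpleGraph V) {α : Type*} (c : V → α) (v : V) (i : α) : ℕ :=
  sInf {m : ℕ | ∃ x, c x = i ∧ G.dist v x = m}

/-- A pruning chain: a decreasing family of convex sets of vertices going from
everything down to a single vertex, such that the vertices dropped at each step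
have degree at most two in the current set. -/
structure PChain (G : SimpleGraph V) where
  C : ℕ → Set V
  N : ℕ
  a0 : V
  Δ : ℕ
  Npos : 0 < N
  mono : ∀ k, C (k+1) ⊆ C k
  conv : ∀ k, Conv G (C k)
  zero : C 0 = Set.univ
  top : ∀ k, N ≤ k → C k = {a0}
  deg2 : ∀ k, ∀ v ∈ C k, v ∉ C (k+1) → (G.neighborSet v ∩ C k).ncard ≤ 2
  degFin : ∀ v : V, (G.neighborSet v).Finite
  degΔ : ∀ v : V, (G.neighborSet v).ncard ≤ Δ

namespace PChain

variable {hc : G.Connected} {ha : G.IsAcyclic}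

lemma chain_mono (ch : PChain G) {j k : ℕ} (h : j ≤ k) : ch.C k ⊆ ch.C j := by
  induction k with
  | zero => simp_all
  | succ k ih =>
    rcases Nat.lt_or_ge j (k+1) with h' | h'
    · exact fun x hx => ih (by omega) (ch.mono k hx)
    · have : j = k + 1 := by omega
      subst this; exact fun x hx => hx

lemma a0_mem (ch : PChain G) (k : ℕ) : ch.a0 ∈ ch.C k := by
  rcases le_total k ch.N with h | h
  · exact ch.chain_mono h (by rw [ch.top ch.N le_rfl]; rfl)
  · rw [ch.top k h]; rfl

variable (hc : G.Connected) (ha : G.IsAcyclic) (ch : PChain G)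

/-- the gate (nearest-point projection) of `v` in `ch.C k` -/
noncomputable def gt (k : ℕ) (v : V) : V :=
  (exists_gate hc ha (ch.conv k) ⟨ch.a0, ch.a0_mem k⟩ v).choose

lemma gt_mem (k : ℕ) (v : V) : ch.gt hc ha k v ∈ ch.C k :=
  (exists_gate hc ha (ch.conv k) ⟨ch.a0, ch.a0_mem k⟩ v).choose_spec.1

lemma gt_spec (k : ℕ) (v : V) : ∀ x ∈ ch.C k,
    G.dist v x = G.dist v (ch.gt hc ha k v) + G.dist (ch.gt hc ha k v) x :=
  (exists_gate hc ha (ch.conv k) ⟨ch.a0, ch.a0_mem k⟩ v).choose_spec.2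

lemma gt_btw (k : ℕ) (v : V) {x : V} (hx : x ∈ ch.C k) :
    Btw G v (ch.gt hc ha k v) x := (ch.gt_spec hc ha k v x hx).symm

lemma gt_le (k : ℕ) (v : V) {x : V} (hx : x ∈ ch.C k) :
    G.dist v (ch.gt hc ha k v) ≤ G.dist v x := by
  have := ch.gt_spec hc ha k v x hx; omega

lemma gt_unique (k : ℕ) (v : V) {x : V} (hx : x ∈ ch.C k)
    (hle : G.dist v x ≤ G.dist v (ch.gt hc ha k v)) : x = ch.gt hc ha k v := by
  have h := ch.gt_spec hc ha k v x hx
  have : G.dist (ch.gt hc ha k v) x = 0 := by omega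
  exact (eq_of_dist_eq_zero hc this).symm

lemma gt_eq_self (k : ℕ) {v : V} (hv : v ∈ ch.C k) : ch.gt hc ha k v = v := by
  have := ch.gt_unique hc ha k v hv
    (by rw [SimpleGraph.dist_self]; exact Nat.zero_le _)
  exact this.symm

lemma dist_gt_eq_zero_iff (k : ℕ) (v : V) :
    G.dist v (ch.gt hc ha k v) = 0 ↔ v ∈ ch.C k := by
  constructor
  · intro h
    have := eq_of_dist_eq_zero hc h
    rw [this]
    exact ch.gt_mem hc ha k v
  · intro h
    rw [ch.gt_eq_self hc ha k h]
    exact SimpleGraph.dist_self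

/-- the level of a vertex: the largest k ≤ N with v ∈ C k -/
noncomputable def lvl (v : V) : ℕ :=
  @Nat.findGreatest (fun k => v ∈ ch.C k) (Classical.decPred _) ch.N

lemma lvl_le (v : V) : ch.lvl v ≤ ch.N :=
  @Nat.findGreatest_le (fun k => v ∈ ch.C k) (Classical.decPred _) ch.N

lemma mem_lvl (v : V) : v ∈ ch.C (ch.lvl v) := by
  have h0 : v ∈ ch.C 0 := by rw [ch.zero]; trivial
  exact @Nat.findGreatest_spec 0 (fun k => v ∈ ch.C k) (Classical.decPred _) ch.N
    (Nat.zero_le _) h0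

lemma le_lvl_iff {k : ℕ} (hk : k ≤ ch.N) (v : V) : v ∈ ch.C k ↔ k ≤ ch.lvl v := by
  constructor
  · intro h
    exact @Nat.le_findGreatest k (fun k => v ∈ ch.C k) (Classical.decPred _) ch.N hk h
  · intro h
    exact ch.chain_mono h (ch.mem_lvl v)

lemma lvl_eq_N_iff (v : V) : ch.lvl v = ch.N ↔ v = ch.a0 := by
  constructor
  · intro h
    have := ch.mem_lvl v
    rw [h, ch.top ch.N le_rfl] at this
    exact this
  · intro h
    subst h
    have := (ch.le_lvl_iff le_rfl ch.a0).mp (ch.a0_mem ch.N)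
    have := ch.lvl_le ch.a0
    omega

lemma lvl_lt {v : V} (h : v ≠ ch.a0) : ch.lvl v < ch.N := by
  have h1 := ch.lvl_le v
  rcases Nat.lt_or_ge (ch.lvl v) ch.N with h2 | h2
  · exact h2
  · exact absurd ((ch.lvl_eq_N_iff v).mp (by omega)) h

lemma not_mem_succ_lvl {v : V} (h : v ≠ ch.a0) : v ∉ ch.C (ch.lvl v + 1) := by
  intro hmem
  have := (ch.le_lvl_iff (by have := ch.lvl_lt h; omega) v).mp hmem
  omega

/-- attachment vertex -/
noncomputable def att (v : V) : V := ch.gt hc ha (ch.lvl v + 1) v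

lemma dlt_ne_zero {v : V} (h : v ≠ ch.a0) : G.dist v (ch.att hc ha v) ≠ 0 := by
  intro h0
  exact ch.not_mem_succ_lvl h ((ch.dist_gt_eq_zero_iff hc ha _ v).mp h0)

lemma exists_emb (z : V) :
    ∃ f : (G.neighborSet z) → Fin ch.Δ, Function.Injective f := by
  have hfin := ch.degFin z
  haveI := hfin.fintype
  have hcard : Fintype.card (G.neighborSet z) ≤ ch.Δ := by
    rw [← Nat.card_eq_fintype_card]
    exact (Nat.card_coe_set_eq _) ▸ ch.degΔ z
  exact ⟨Fin.castLE hcard ∘ (Fintype.equivFin (G.neighborSet z)),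
    (Fin.castLE_injective hcard).comp (Fintype.equivFin _).injective⟩

noncomputable def iot (z : V) : (G.neighborSet z) → Fin ch.Δ :=
  (ch.exists_emb z).choose

lemma iot_inj (z : V) : Function.Injective (ch.iot z) :=
  (ch.exists_emb z).choose_spec

/-- the payload of the color of a vertex -/
noncomputable def payload (v : V) : Fin ch.Δ ⊕ Bool :=
  if hd : G.dist v (ch.att hc ha v) = 1 then
    Sum.inl (ch.iot (ch.att hc ha v) ⟨v, by
      rw [SimpleGraph.mem_neighborSet]
      exact (SimpleGraph.dist_eq_one_iff_adj.mp hd).symm⟩)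
  else Sum.inr (decide (G.dist v (ch.att hc ha v) % 2 = 0))

open Classical in
/-- the coloring -/
noncomputable def col (v : V) : Option (Fin ch.N × (Fin ch.Δ ⊕ Bool)) :=
  if h : v = ch.a0 then none else some (⟨ch.lvl v, ch.lvl_lt h⟩, ch.payload hc ha v)

lemma col_proper {u v : V} (h : G.Adj u v) : ch.col hc ha u ≠ ch.col hc ha v := by
  intro hcol
  have hne : u ≠ v := h.ne
  by_cases hu : u = ch.a0
  · by_cases hv : v = ch.a0
    · exact hne (hu.trans hv.symm)
    · simp [col, hu, hv] at hcol
  by_cases hv : v = ch.a0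
  · simp [col, hu, hv] at hcol
  simp only [col, dif_neg hu, dif_neg hv, Option.some.injEq, Prod.mk.injEq,
    Fin.mk.injEq] at hcol
  obtain ⟨hlvl, hpay⟩ := hcol
  set a₁ := ch.att hc ha u with ha1
  set a₂ := ch.att hc ha v with ha2
  have hA1 : a₁ ∈ ch.C (ch.lvl u + 1) := ch.gt_mem hc ha _ u
  have hA2 : a₂ ∈ ch.C (ch.lvl u + 1) := by rw [hlvl]; exact ch.gt_mem hc ha _ v
  have hduz : G.dist u a₁ ≠ 0 := ch.dlt_ne_zero hc ha hu
  have hdvz : G.dist v a₂ ≠ 0 := ch.dlt_ne_zero hc ha hv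
  by_cases haa : a₁ = a₂
  · -- same attachment : distances differ by one
    have hdc := adj_dist_cases hc ha h a₁
    have hvv : G.dist v a₁ = G.dist v a₂ := by rw [haa]
    unfold payload at hpay
    by_cases h1 : G.dist u (att hc ha ch u) = 1
    · by_cases h2 : G.dist v (att hc ha ch v) = 1
      · rw [← ha1] at h1
        rw [← ha2] at h2
        rw [hvv] at hdc
        omega
      · rw [dif_pos h1, dif_neg h2] at hpay
        exact absurd hpay (by simp)
    · by_cases h2 : G.dist v (att hc ha ch v) = 1
      · rw [dif_neg h1, dif_pos h2] at hpay
        exact absurd hpay (by simp)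
      · rw [dif_neg h1, dif_neg h2] at hpay
        have hinr := Sum.inr.inj hpay
        rw [decide_eq_decide, ← ha1, ← ha2] at hinr
        rw [← ha1] at h1
        rw [← ha2] at h2
        by_cases hp : G.dist u a₁ % 2 = 0
        · have := hinr.mp hp
          omega
        · have : ¬ G.dist v a₂ % 2 = 0 := fun hq => hp (hinr.mpr hq)
          omega
  · -- different attachments : geometrically impossible
    exfalso
    have g1 : G.dist u a₂ = G.dist u a₁ + G.dist a₁ a₂ :=
      ch.gt_spec hc ha (ch.lvl u + 1) u a₂ hA2
    have g2 : G.dist v a₁ = G.dist v a₂ + G.dist a₂ a₁ := by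
      have := ch.gt_spec hc ha (ch.lvl v + 1) v a₁ (by rw [← hlvl]; exact hA1)
      exact this
    have hd1 : G.dist u v = 1 := SimpleGraph.dist_eq_one_iff_adj.mpr h
    have hdvu : G.dist v u = 1 := by rw [SimpleGraph.dist_comm]; exact hd1
    have t1 : G.dist u a₂ ≤ G.dist u v + G.dist v a₂ := hc.dist_triangle
    have t2 : G.dist v a₁ ≤ G.dist v u + G.dist u a₁ := hc.dist_triangle
    have hc12 : G.dist a₁ a₂ = G.dist a₂ a₁ := SimpleGraph.dist_comm
    have hpos : 0 < G.dist a₁ a₂ := dist_pos_of_ne hc haa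
    have hm : G.dist u a₁ = G.dist v a₂ ∧ G.dist a₁ a₂ = 1 := by omega
    have hbtw1 : Btw G u a₁ a₂ := g1.symm
    have hbtw2 : Btw G u v a₂ := by unfold Btw; omega
    rcases btw_dichotomy hc ha hbtw1 hbtw2 with hd | hd
    · -- Btw u v a₁
      have hle : G.dist v a₂ ≤ G.dist v a₁ := ch.gt_le hc ha _ v
        (show a₁ ∈ ch.C (ch.lvl v + 1) by rw [← hlvl]; exact hA1)
      unfold Btw at hd
      omega
    · -- Btw u a₁ v : forces v = a₁ ∈ C (lvl v + 1), contradiction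
      unfold Btw at hd
      have : G.dist a₁ v = 0 := by omega
      have hva1 : v = a₁ := (eq_of_dist_eq_zero hc this).symm
      rw [← hva1] at hA1
      rw [hlvl] at hA1
      exact ch.not_mem_succ_lvl hv hA1

lemma col_eq_none_iff (v : V) : ch.col hc ha v = none ↔ v = ch.a0 := by
  by_cases h : v = ch.a0 <;> simp [col, h]

lemma col_pieces {x y : V} (hx : x ≠ ch.a0) (hy : y ≠ ch.a0)
    (h : ch.col hc ha x = ch.col hc ha y) :
    ch.lvl x = ch.lvl y ∧ ch.payload hc ha x = ch.payload hc ha y := by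
  simp only [col, dif_neg hx, dif_neg hy, Option.some.injEq, Prod.mk.injEq,
    Fin.mk.injEq] at h
  exact h

lemma payload_dlt_one {x y : V} (h : ch.payload hc ha x = ch.payload hc ha y)
    (hy : G.dist y (ch.att hc ha y) = 1) : G.dist x (ch.att hc ha x) = 1 := by
  by_contra hx
  unfold payload at h
  rw [dif_pos hy, dif_neg hx] at h
  exact absurd h (by simp)

open Classical in
/-- a total version of `iot` -/
noncomputable def jot (z v : V) : Option (Fin ch.Δ) :=
  if h : v ∈ G.neighborSet z then some (ch.iot z ⟨v, h⟩) else none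

lemma jot_inj {z p q : V} (hp : p ∈ G.neighborSet z) (hq : q ∈ G.neighborSet z)
    (h : ch.jot z p = ch.jot z q) : p = q := by
  rw [jot, jot, dif_pos hp, dif_pos hq, Option.some.injEq] at h
  exact congrArg Subtype.val (ch.iot_inj z h)

lemma payload_inl_elim {x y : V} (h : ch.payload hc ha x = ch.payload hc ha y)
    (hx1 : G.dist x (ch.att hc ha x) = 1) (hy1 : G.dist y (ch.att hc ha y) = 1)
    (hatt : ch.att hc ha x = ch.att hc ha y) : x = y := by
  unfold payload at h
  rw [dif_pos hx1, dif_pos hy1] at h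
  have h' := Sum.inl.inj h
  have hmx : x ∈ G.neighborSet (ch.att hc ha x) := by
    rw [SimpleGraph.mem_neighborSet]
    exact (SimpleGraph.dist_eq_one_iff_adj.mp hx1).symm
  have hmy : y ∈ G.neighborSet (ch.att hc ha y) := by
    rw [SimpleGraph.mem_neighborSet]
    exact (SimpleGraph.dist_eq_one_iff_adj.mp hy1).symm
  have hjx : ch.jot (ch.att hc ha x) x = ch.jot (ch.att hc ha y) y := by
    rw [jot, jot, dif_pos hmx, dif_pos hmy, Option.some.injEq]
    exact h'
  rw [hatt] at hjx
  exact ch.jot_inj (hatt ▸ hmx) hmy hjx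

lemma code_le {v x : V} {i : Option (Fin ch.N × (Fin ch.Δ ⊕ Bool))}
    (hx : ch.col hc ha x = i) : codeCol G (ch.col hc ha) v i ≤ G.dist v x := by
  unfold codeCol
  exact Nat.sInf_le ⟨x, hx, rfl⟩

lemma code_attained {v : V} {i : Option (Fin ch.N × (Fin ch.Δ ⊕ Bool))}
    (hne : ∃ x, ch.col hc ha x = i) :
    ∃ x, ch.col hc ha x = i ∧ G.dist v x = codeCol G (ch.col hc ha) v i := by
  obtain ⟨x, hx⟩ := hne
  unfold codeCol
  exact @Nat.sInf_mem {m : ℕ | ∃ x, ch.col hc ha x = i ∧ G.dist v x = m}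
    ⟨G.dist v x, ⟨x, hx, rfl⟩⟩

lemma mem_of_col_eq {k : ℕ} (hk : k ≤ ch.N) {x g : V} (hg : g ∈ ch.C k)
    (h : ch.col hc ha x = ch.col hc ha g) : x ∈ ch.C k := by
  by_cases hg0 : g = ch.a0
  · have : ch.col hc ha x = none := by
      rw [h, hg0, (ch.col_eq_none_iff hc ha ch.a0).mpr rfl]
    rw [(ch.col_eq_none_iff hc ha x).mp this]
    exact ch.a0_mem k
  · have hx0 : x ≠ ch.a0 := by
      intro h0
      rw [h0, (ch.col_eq_none_iff hc ha ch.a0).mpr rfl] at h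
      exact hg0 ((ch.col_eq_none_iff hc ha g).mp h.symm)
    have hlvl := (ch.col_pieces hc ha hx0 hg0 h).1
    have hgk := (ch.le_lvl_iff hk g).mp hg
    exact (ch.le_lvl_iff hk x).mpr (by omega)

lemma code_gt {k : ℕ} (hk : k ≤ ch.N) (v : V) :
    codeCol G (ch.col hc ha) v (ch.col hc ha (ch.gt hc ha k v))
      = G.dist v (ch.gt hc ha k v) := by
  refine le_antisymm (ch.code_le hc ha rfl) (le_csInf ⟨_, ch.gt hc ha k v, rfl, rfl⟩ ?_)
  rintro b ⟨x, hx, rfl⟩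
  exact ch.gt_le hc ha k v (ch.mem_of_col_eq hc ha hk (ch.gt_mem hc ha k v) hx)

lemma code_dist_eq {u w : V}
    (hcode : ∀ i, codeCol G (ch.col hc ha) u i = codeCol G (ch.col hc ha) w i)
    {k : ℕ} (hk : k ≤ ch.N) :
    G.dist u (ch.gt hc ha k u) = G.dist w (ch.gt hc ha k w) := by
  have key : ∀ u' w' : V,
      (∀ i, codeCol G (ch.col hc ha) u' i = codeCol G (ch.col hc ha) w' i) →
      G.dist w' (ch.gt hc ha k w') ≤ G.dist u' (ch.gt hc ha k u') := by
    intro u' w' hcode'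
    have h1 := ch.code_gt hc ha hk u'
    have h2 := hcode' (ch.col hc ha (ch.gt hc ha k u'))
    obtain ⟨x, hx, hdx⟩ := ch.code_attained hc ha
      (v := w') (i := ch.col hc ha (ch.gt hc ha k u')) ⟨ch.gt hc ha k u', rfl⟩
    have hxk : x ∈ ch.C k := ch.mem_of_col_eq hc ha hk (ch.gt_mem hc ha k u') hx
    have := ch.gt_le hc ha k w' hxk
    omega
  exact le_antisymm (key w u (fun i => (hcode i).symm)) (key u w hcode)

lemma lvl_code_eq {u w : V}
    (hcode : ∀ i, codeCol G (ch.col hc ha) u i = codeCol G (ch.col hc ha) w i) :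
    ch.lvl u = ch.lvl w := by
  have key : ∀ u' w' : V,
      (∀ i, codeCol G (ch.col hc ha) u' i = codeCol G (ch.col hc ha) w' i) →
      ch.lvl u' ≤ ch.lvl w' := by
    intro u' w' hcode'
    have h0 : G.dist u' (ch.gt hc ha (ch.lvl u') u') = 0 :=
      (ch.dist_gt_eq_zero_iff hc ha (ch.lvl u') u').mpr (ch.mem_lvl u')
    have h1 := ch.code_dist_eq hc ha hcode' (ch.lvl_le u')
    have h2 : w' ∈ ch.C (ch.lvl u') :=
      (ch.dist_gt_eq_zero_iff hc ha (ch.lvl u') w').mp (by omega)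
    exact (ch.le_lvl_iff (ch.lvl_le u') w').mp h2
  exact le_antisymm (key u w hcode) (key w u (fun i => (hcode i).symm))

lemma uniq (k : ℕ) {z : V} (hz : z ∈ ch.C (k+1)) :
    ∀ m, 1 ≤ m → ∀ x y : V, x ∈ ch.C k → x ∉ ch.C (k+1) → y ∈ ch.C k → y ∉ ch.C (k+1) →
    ch.gt hc ha (k+1) x = z → ch.gt hc ha (k+1) y = z →
    G.dist x z = m → G.dist y z = m → fv hc x z = fv hc y z → x = y := by
  have zmem_k : z ∈ ch.C k := ch.mono k hz
  intro m hm
  induction m, hm using Nat.le_induction with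
  | base =>
    intro x y _ _ _ _ _ _ hxz hyz hfv
    have hax : G.Adj x z := SimpleGraph.dist_eq_one_iff_adj.mp hxz
    have hay : G.Adj y z := SimpleGraph.dist_eq_one_iff_adj.mp hyz
    rw [fv_self hc ha hax, fv_self hc ha hay] at hfv
    exact hfv
  | succ m hm ih =>
    intro x y hxk hxk1 hyk hyk1 hgx hgy hxz hyz hfv
    by_contra hxy
    have key : ∀ v : V, v ∈ ch.C k → v ∉ ch.C (k+1) → ch.gt hc ha (k+1) v = z →
        G.dist v z = m+1 →
        G.Adj (fv hc z v) v ∧ (fv hc z v) ∈ ch.C k ∧ (fv hc z v) ∉ ch.C (k+1) ∧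
        ch.gt hc ha (k+1) (fv hc z v) = z ∧ G.dist (fv hc z v) z = m ∧
        fv hc (fv hc z v) z = fv hc v z := by
      intro v hvk hvk1 hgv hdv
      have hczv : G.dist z v = G.dist v z := SimpleGraph.dist_comm
      have hdzv : G.dist z v ≠ 0 := by omega
      set v' := fv hc z v with hv'def
      have hadj : G.Adj v' v := fv_adj hc hdzv
      have hbtw : Btw G z v' v := fv_btw hc hdzv
      have hd1 : G.dist v' v = 1 := SimpleGraph.dist_eq_one_iff_adj.mpr hadj
      have hdzv' : G.dist z v' = m := by
        have h5 := fv_dist hc hdzv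
        rw [← hv'def] at h5
        omega
      have hcv' : G.dist v' z = G.dist z v' := SimpleGraph.dist_comm
      have hcvv' : G.dist v v' = G.dist v' v := SimpleGraph.dist_comm
      have hv'k : v' ∈ ch.C k := ch.conv k v hvk z zmem_k v' (btw_symm hbtw)
      have hv'k1 : v' ∉ ch.C (k+1) := by
        intro hmem
        have hle := ch.gt_le hc ha (k+1) v hmem
        rw [hgv] at hle
        omega
      have hgv' : ch.gt hc ha (k+1) v' = z := by
        have hgC := ch.gt_mem hc ha (k+1) v'
        have h1 := ch.gt_le hc ha (k+1) v hgC
        rw [hgv] at h1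
        have h2 : G.dist v (ch.gt hc ha (k+1) v') ≤
            G.dist v v' + G.dist v' (ch.gt hc ha (k+1) v') := hc.dist_triangle
        exact (ch.gt_unique hc ha (k+1) v' hz (by omega)).symm
      refine ⟨hadj, hv'k, hv'k1, hgv', by omega, ?_⟩
      set F := fv hc v z with hFdef
      have hvz : G.dist v z ≠ 0 := by omega
      have hFb : Btw G v F z := fv_btw hc hvz
      have hFadj : G.Adj F z := fv_adj hc hvz
      have hFd := fv_dist hc hvz
      have hFz1 : G.dist F z = 1 := SimpleGraph.dist_eq_one_iff_adj.mpr hFadj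
      have hv'zne : G.dist v' z ≠ 0 := by omega
      symm
      apply fv_unique hc ha hv'zne hFadj
      have hdich := btw_dichotomy hc ha (btw_symm hFb) hbtw
      have hcFz : G.dist z F = G.dist F z := SimpleGraph.dist_comm
      rcases hdich with hcase | hcase
      · -- Btw z v' F : forces m = 1 and v' = F
        unfold Btw at hcase
        have hv'F : G.dist v' F = 0 := by omega
        have : v' = F := eq_of_dist_eq_zero hc hv'F
        rw [this]
        exact btw_self_left
      · -- Btw z F v'
        unfold Btw at hcase ⊢
        have hcv'F : G.dist v' F = G.dist F v' := SimpleGraph.dist_comm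
        omega
    obtain ⟨hax, hxk', hxk1', hgx', hdx', hfx⟩ := key x hxk hxk1 hgx hxz
    obtain ⟨hay, hyk', hyk1', hgy', hdy', hfy⟩ := key y hyk hyk1 hgy hyz
    have hss : fv hc z x = fv hc z y :=
      ih (fv hc z x) (fv hc z y) hxk' hxk1' hyk' hyk1' hgx' hgy' hdx' hdy'
        (by rw [hfx, hfy]; exact hfv)
    set s := fv hc z x with hsdef
    have hsy : fv hc z y = s := hss.symm
    have hszm : G.dist z s = m := by
      have : G.dist s z = G.dist z s := SimpleGraph.dist_comm
      omega
    have hszne : G.dist z s ≠ 0 := by omega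
    set F' := fv hc z s with hF'def
    have hF'adj : G.Adj F' s := fv_adj hc hszne
    have hF'btw : Btw G z F' s := fv_btw hc hszne
    have hF'd : G.dist z F' + 1 = m := by
      have h5 := fv_dist hc hszne
      rw [← hF'def] at h5
      omega
    have hF'k : F' ∈ ch.C k := ch.conv k s hxk' z zmem_k F' (btw_symm hF'btw)
    have hxF' : x ≠ F' := by
      intro h
      have hc1 : G.dist z x = G.dist x z := SimpleGraph.dist_comm
      rw [← h] at hF'd
      omega
    have hyF' : y ≠ F' := by
      intro h
      have hc1 : G.dist z y = G.dist y z := SimpleGraph.dist_comm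
      rw [← h] at hF'd
      omega
    have h3 : ({x, y, F'} : Set V).ncard = 3 :=
      Set.ncard_eq_three.mpr ⟨x, y, F', hxy, hxF', hyF', rfl⟩
    have hsub : ({x, y, F'} : Set V) ⊆ G.neighborSet s ∩ ch.C k := by
      intro a hA
      rcases hA with rfl | rfl | rfl
      · exact ⟨by rw [SimpleGraph.mem_neighborSet]; exact hax, hxk⟩
      · exact ⟨by rw [SimpleGraph.mem_neighborSet]; rw [hsy] at hay; exact hay, hyk⟩
      · exact ⟨by rw [SimpleGraph.mem_neighborSet]; exact hF'adj.symm, hF'k⟩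
    have hfin : (G.neighborSet s ∩ ch.C k).Finite := (ch.degFin s).inter_of_left _
    have hle := Set.ncard_le_ncard hsub hfin
    have hd2 := ch.deg2 k s hxk' hxk1'
    omega

lemma main_step {u w : V}
    (hcode : ∀ i, codeCol G (ch.col hc ha) u i = codeCol G (ch.col hc ha) w i)
    {k : ℕ} (hkN : k < ch.N) (hLu : ch.lvl u ≤ k) (hLw : ch.lvl w ≤ k)
    (hg : ch.gt hc ha (k+1) u = ch.gt hc ha (k+1) w) :
    ch.gt hc ha k u = ch.gt hc ha k w := by
  have hk1N : k + 1 ≤ ch.N := hkN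
  set z := ch.gt hc ha (k+1) u with hzdef
  have hzw : ch.gt hc ha (k+1) w = z := hg.symm
  have hzC : z ∈ ch.C (k+1) := ch.gt_mem hc ha (k+1) u
  have hzCk : z ∈ ch.C k := ch.mono k hzC
  have he := ch.code_dist_eq hc ha hcode hk1N
  rw [← hzdef, hzw] at he
  -- he : G.dist u z = G.dist w z
  have hδ := ch.code_dist_eq hc ha hcode (le_of_lt hkN)
  have hu1 : u ∉ ch.C (k+1) := by
    intro hmem
    have := (ch.le_lvl_iff hk1N u).mp hmem
    omega
  have hw1 : w ∉ ch.C (k+1) := by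
    intro hmem
    have := (ch.le_lvl_iff hk1N w).mp hmem
    omega
  have he0 : G.dist u z ≠ 0 := by
    intro h0
    exact hu1 ((ch.dist_gt_eq_zero_iff hc ha (k+1) u).mp (by rw [← hzdef]; exact h0))
  have hδle : G.dist u (ch.gt hc ha k u) ≤ G.dist u z := ch.gt_le hc ha k u hzCk
  by_cases hcase : G.dist u (ch.gt hc ha k u) = G.dist u z
  · have h1 : z = ch.gt hc ha k u := ch.gt_unique hc ha k u hzCk (by omega)
    have h2 : z = ch.gt hc ha k w := ch.gt_unique hc ha k w hzCk (by omega)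
    rw [← h1, ← h2]
  · have hδlt : G.dist u (ch.gt hc ha k u) < G.dist u z := lt_of_le_of_ne hδle hcase
    -- common facts for v ∈ {u, w}
    have key : ∀ v : V, v ∉ ch.C (k+1) → ch.gt hc ha (k+1) v = z →
        G.dist v z = G.dist u z →
        G.dist v (ch.gt hc ha k v) = G.dist u (ch.gt hc ha k u) →
        fv hc v z ∈ ch.C k ∧ fv hc v z ∉ ch.C (k+1) ∧
        ch.gt hc ha (k+1) (fv hc v z) = z ∧
        G.dist v (fv hc v z) + 1 = G.dist u z ∧ G.dist (fv hc v z) z = 1 ∧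
        ch.gt hc ha k v ∈ ch.C k ∧ ch.gt hc ha k v ∉ ch.C (k+1) ∧
        ch.gt hc ha (k+1) (ch.gt hc ha k v) = z ∧
        G.dist (ch.gt hc ha k v) z + G.dist u (ch.gt hc ha k u) = G.dist u z ∧
        fv hc (ch.gt hc ha k v) z = fv hc v z := by
      intro v hv1 hgv hdvz hδv
      have hvz0 : G.dist v z ≠ 0 := by omega
      set b := ch.gt hc ha k v with hbdef
      set F := fv hc v z with hFdef
      have hFbtw : Btw G v F z := fv_btw hc hvz0
      have hFadj : G.Adj F z := fv_adj hc hvz0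
      have hF1 : G.dist F z = 1 := SimpleGraph.dist_eq_one_iff_adj.mpr hFadj
      have hdF : G.dist v F + 1 = G.dist u z := by
        have h5 := fv_dist hc hvz0
        rw [← hFdef] at h5
        omega
      have hbC : b ∈ ch.C k := ch.gt_mem hc ha k v
      have hbbtw : Btw G v b z := ch.gt_btw hc ha k v hzCk
      have hdbz : G.dist b z + G.dist u (ch.gt hc ha k u) = G.dist u z := by
        unfold Btw at hbbtw
        omega
      have hbk1 : b ∉ ch.C (k+1) := by
        intro hmem
        have hle := ch.gt_le hc ha (k+1) v hmem
        rw [hgv] at hle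
        omega
      have hgb : ch.gt hc ha (k+1) b = z := by
        have hgC := ch.gt_mem hc ha (k+1) b
        have h1 := ch.gt_le hc ha (k+1) v hgC
        rw [hgv] at h1
        have h2 : G.dist v (ch.gt hc ha (k+1) b) ≤
            G.dist v b + G.dist b (ch.gt hc ha (k+1) b) := hc.dist_triangle
        exact (ch.gt_unique hc ha (k+1) b hzC (by omega)).symm
      have hbF : Btw G b F z := by
        have hdich := btw_dichotomy hc ha (btw_symm hFbtw) (btw_symm hbbtw)
        have hc1 : G.dist z F = G.dist F z := SimpleGraph.dist_comm
        have hc2 : G.dist z b = G.dist b z := SimpleGraph.dist_comm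
        rcases hdich with hcase' | hcase'
        · -- Btw z b F : forces b = F
          unfold Btw at hcase'
          have : G.dist b F = 0 := by omega
          rw [eq_of_dist_eq_zero hc this]
          exact btw_self_left
        · -- Btw z F b
          unfold Btw at hcase' ⊢
          have hc3 : G.dist b F = G.dist F b := SimpleGraph.dist_comm
          omega
      have hFk : F ∈ ch.C k := ch.conv k b hbC z hzCk F hbF
      have hFk1 : F ∉ ch.C (k+1) := by
        intro hmem
        have hle := ch.gt_le hc ha (k+1) v hmem
        rw [hgv] at hle
        omega
      have hgF : ch.gt hc ha (k+1) F = z := by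
        have hgC := ch.gt_mem hc ha (k+1) F
        have h1 := ch.gt_le hc ha (k+1) v hgC
        rw [hgv] at h1
        have h2 : G.dist v (ch.gt hc ha (k+1) F) ≤
            G.dist v F + G.dist F (ch.gt hc ha (k+1) F) := hc.dist_triangle
        exact (ch.gt_unique hc ha (k+1) F hzC (by omega)).symm
      have hfb : fv hc b z = F := by
        have hbz0 : G.dist b z ≠ 0 := by omega
        exact (fv_unique hc ha hbz0 hFadj hbF).symm
      exact ⟨hFk, hFk1, hgF, hdF, hF1, hbC, hbk1, hgb, hdbz, hfb⟩
    obtain ⟨hFkU, hFk1U, hgFU, hdFU, hF1U, hbCU, hbk1U, hgbU, hdbzU, hfbU⟩ :=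
      key u hu1 (by rw [← hzdef]) rfl rfl
    obtain ⟨hFkW, hFk1W, hgFW, hdFW, hF1W, hbCW, hbk1W, hgbW, hdbzW, hfbW⟩ :=
      key w hw1 hzw he.symm hδ.symm
    by_cases hFF : fv hc u z = fv hc w z
    · exact ch.uniq hc ha k hzC (G.dist u z - G.dist u (ch.gt hc ha k u)) (by omega)
        (ch.gt hc ha k u) (ch.gt hc ha k w) hbCU hbk1U hbCW hbk1W hgbU hgbW
        (by omega) (by omega) (by rw [hfbU, hfbW]; exact hFF)
    · exfalso
      set Fu := fv hc u z with hFudef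
      set Fw := fv hc w z with hFwdef
      have hlFu : ch.lvl Fu = k := by
        have h1 := (ch.le_lvl_iff (le_of_lt hkN) Fu).mp hFkU
        have h2 : ¬ (k + 1 ≤ ch.lvl Fu) := fun hle =>
          hFk1U ((ch.le_lvl_iff hk1N Fu).mpr hle)
        omega
      have hattFu : ch.att hc ha Fu = z := by
        unfold att
        rw [hlFu]
        exact hgFU
      have hdltFu : G.dist Fu (ch.att hc ha Fu) = 1 := by rw [hattFu]; exact hF1U
      have hFu0 : Fu ≠ ch.a0 := fun h0 => hFk1U (h0 ▸ ch.a0_mem (k+1))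
      -- lower bound on distances from w to the color class of Fu
      have hlow : ∀ x : V, ch.col hc ha x = ch.col hc ha Fu →
          G.dist u z + 1 ≤ G.dist w x := by
        intro x hx
        have hx0 : x ≠ ch.a0 := by
          intro h0
          rw [h0, (ch.col_eq_none_iff hc ha ch.a0).mpr rfl] at hx
          exact hFu0 ((ch.col_eq_none_iff hc ha Fu).mp hx.symm)
        obtain ⟨hlx, hpx⟩ := ch.col_pieces hc ha hx0 hFu0 hx
        have hdx1 : G.dist x (ch.att hc ha x) = 1 := ch.payload_dlt_one hc ha hpx hdltFu
        have hxk1 : x ∉ ch.C (k+1) := by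
          intro hmem
          have := (ch.le_lvl_iff hk1N x).mp hmem
          omega
        have hattx : ch.att hc ha x = ch.gt hc ha (k+1) x := by
          unfold att
          rw [hlx, hlFu]
        have hwz0 : G.dist w z ≠ 0 := by omega
        by_cases hzz : ch.att hc ha x = z
        · -- then x = Fu
          have hxFu : x = Fu := ch.payload_inl_elim hc ha hpx hdx1 hdltFu
            (by rw [hzz, hattFu])
          have hfvx : fv hc Fu z = Fu :=
            fv_self hc ha (SimpleGraph.dist_eq_one_iff_adj.mp hF1U)
          have hne : fv hc w z ≠ fv hc Fu z := by
            rw [hfvx, ← hFwdef]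
            intro hh
            exact hFF (hh.symm ▸ rfl)
          have hbzx := btw_of_fv_ne hc ha hwz0 (by rw [hF1U]; omega) hne
          unfold Btw at hbzx
          have hc1 : G.dist z Fu = G.dist Fu z := SimpleGraph.dist_comm
          rw [hxFu]
          omega
        · -- att x = z' ≠ z
          have hxz0 : G.dist x z ≠ 0 := by
            intro h0
            exact hxk1 ((eq_of_dist_eq_zero hc h0) ▸ hzC)
          have hz'C : ch.att hc ha x ∈ ch.C (k+1) := by
            rw [hattx]
            exact ch.gt_mem hc ha (k+1) x
          have hgsp : G.dist x z = G.dist x (ch.att hc ha x) + G.dist (ch.att hc ha x) z := by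
            have := ch.gt_spec hc ha (k+1) x z hzC
            rw [← hattx] at this
            exact this
          have hz'z : G.dist (ch.att hc ha x) z ≠ 0 :=
            fun h0 => hzz (eq_of_dist_eq_zero hc h0)
          -- fv x z lies in C (k+1)
          have hF''btw : Btw G x (fv hc x z) z := fv_btw hc hxz0
          have hF''adj : G.Adj (fv hc x z) z := fv_adj hc hxz0
          have hF''1 : G.dist (fv hc x z) z = 1 := SimpleGraph.dist_eq_one_iff_adj.mpr hF''adj
          have hbz'x : Btw G x (ch.att hc ha x) z := hgsp.symm
          have hF''C : fv hc x z ∈ ch.C (k+1) := by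
            have hdich := btw_dichotomy hc ha (btw_symm hF''btw) (btw_symm hbz'x)
            rcases hdich with hcase' | hcase'
            · -- Btw z (att x) (fv x z)
              unfold Btw at hcase'
              have hc1 : G.dist z (fv hc x z) = G.dist (fv hc x z) z := SimpleGraph.dist_comm
              have hc2 : G.dist z (ch.att hc ha x) = G.dist (ch.att hc ha x) z :=
                SimpleGraph.dist_comm
              have : G.dist (ch.att hc ha x) (fv hc x z) = 0 := by omega
              rw [← eq_of_dist_eq_zero hc this]
              exact hz'C
            · -- Btw z (fv x z) (att x)
              exact ch.conv (k+1) z hzC (ch.att hc ha x) hz'C (fv hc x z) hcase'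
          have hne : fv hc w z ≠ fv hc x z := by
            intro hh
            rw [← hFwdef] at hh
            exact hFk1W (hh ▸ hF''C)
          have hbzx := btw_of_fv_ne hc ha hwz0 hxz0 hne
          unfold Btw at hbzx
          have hc1 : G.dist z x = G.dist x z := SimpleGraph.dist_comm
          omega
      obtain ⟨x, hx, hdx⟩ := ch.code_attained hc ha (v := w)
        (i := ch.col hc ha Fu) ⟨Fu, rfl⟩
      have h1 := hlow x hx
      have h2 := hcode (ch.col hc ha Fu)
      have h3 := ch.code_le hc ha (v := u) (x := Fu) (i := ch.col hc ha Fu) rfl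
      omega

lemma col_code_inj {u w : V}
    (hcode : ∀ i, codeCol G (ch.col hc ha) u i = codeCol G (ch.col hc ha) w i) :
    u = w := by
  have hlvl := ch.lvl_code_eq hc ha hcode
  have base : ch.gt hc ha ch.N u = ch.gt hc ha ch.N w := by
    have h1 : ch.gt hc ha ch.N u ∈ ch.C ch.N := ch.gt_mem hc ha ch.N u
    have h2 : ch.gt hc ha ch.N w ∈ ch.C ch.N := ch.gt_mem hc ha ch.N w
    rw [ch.top ch.N le_rfl, Set.mem_singleton_iff] at h1 h2
    rw [h1, h2]
  have hLN := ch.lvl_le u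
  have step : ∀ j, j ≤ ch.N - ch.lvl u →
      ch.gt hc ha (ch.N - j) u = ch.gt hc ha (ch.N - j) w := by
    intro j
    induction j with
    | zero => intro _; simpa using base
    | succ j ih =>
      intro hj
      have harith : ch.N - (j+1) + 1 = ch.N - j := by omega
      have hprev := ih (by omega)
      rw [← harith] at hprev
      exact ch.main_step hc ha hcode (by omega) (by omega) (by omega) hprev
  have hfin := step (ch.N - ch.lvl u) le_rfl
  have harith2 : ch.N - (ch.N - ch.lvl u) = ch.lvl u := by omega
  rw [harith2] at hfin
  rw [ch.gt_eq_self hc ha (ch.lvl u) (ch.mem_lvl u),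
    ch.gt_eq_self hc ha (ch.lvl u) (by rw [hlvl]; exact ch.mem_lvl w)] at hfin
  exact hfin

include hc ha ch in
theorem exists_locating : ∃ (t : ℕ) (c : V → Fin t), IsLocatingColoring G c := by
  classical
  set α := Option (Fin ch.N × (Fin ch.Δ ⊕ Bool)) with hα
  set e : α ≃ Fin (Fintype.card α) := Fintype.equivFin α with he
  refine ⟨Fintype.card α, fun v => e (ch.col hc ha v), ?_, ?_⟩
  · intro x y hxy hcontra
    exact ch.col_proper hc ha hxy (e.injective hcontra)
  · intro x y hxy
    apply ch.col_code_inj hc ha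
    intro i
    have hset : ∀ v : V, distClass G (fun v => e (ch.col hc ha v)) v (e i)
        = codeCol G (ch.col hc ha) v i := by
      intro v
      unfold distClass codeCol
      congr 1
      ext m
      simp only [Set.mem_setOf_eq, EmbeddingLike.apply_eq_iff_eq]
    have h1 := congrFun hxy (e i)
    simp only at h1
    rw [hset x, hset y] at h1
    exact h1

end PChain

end S17

theorem stmt_17 {V : Type*} [Infinite V] (G : SimpleGraph V)
    (hconn : G.Connected) (hacyc : G.IsAcyclic)
    (hbdd : ∃ Δ : ℕ, ∀ v : V, (G.neighborSet v).Finite ∧ (G.neighborSet v).ncard ≤ Δ)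
    (hpath : ∃ n : ℕ, IsPathlike G ((pruneStep G)^[n] Set.univ)) :
    ∃ (t : ℕ) (c : V → Fin t), IsLocatingColoring G c := by
  classical
  obtain ⟨Δ, hΔ⟩ := hbdd
  obtain ⟨n, hpl⟩ := hpath
  obtain ⟨⟨a0, ha0⟩⟩ := hpl.1.nonempty
  set S : ℕ → Set V := fun k => if k ≤ n then (pruneStep G)^[k] Set.univ else {a0}
    with hSdef
  have hmono : ∀ k, S (k+1) ⊆ S k := by
    intro k
    by_cases h1 : k + 1 ≤ n
    · have h2 : k ≤ n := by omega
      simp only [hSdef, if_pos h1, if_pos h2, Function.iterate_succ_apply']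
      exact S17.pruneStep_subset _
    · by_cases h2 : k ≤ n
      · intro x hx
        simp only [hSdef] at hx ⊢
        rw [if_neg h1, Set.mem_singleton_iff] at hx
        rw [if_pos h2, hx]
        have h4 : k = n := by omega
        rw [h4]
        exact ha0
      · simp only [hSdef, if_neg h1, if_neg h2]
        exact fun x hx => hx
  have hconv : ∀ k, S17.Conv G (S k) := by
    intro k
    by_cases h1 : k ≤ n
    · simp only [hSdef, if_pos h1]
      exact S17.conv_iterate hconn hacyc k
    · simp only [hSdef, if_neg h1]
      intro x hx y hy m hb
      rw [Set.mem_singleton_iff] at hx hy ⊢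
      rw [hx, hy] at hb
      unfold S17.Btw at hb
      rw [SimpleGraph.dist_self] at hb
      have h0 : G.dist a0 m = 0 := by omega
      exact (S17.eq_of_dist_eq_zero hconn h0).symm
  have hzero : S 0 = Set.univ := by
    simp only [hSdef, if_pos (Nat.zero_le n), Function.iterate_zero_apply]
  have htop : ∀ k, n + 1 ≤ k → S k = {a0} := fun k hk => by
    simp only [hSdef, if_neg (by omega : ¬ (k ≤ n))]
  have hdeg2 : ∀ k, ∀ v ∈ S k, v ∉ S (k+1) → (G.neighborSet v ∩ S k).ncard ≤ 2 := by
    intro k v hv hnv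
    by_cases h1 : k + 1 ≤ n
    · have h2 : k ≤ n := by omega
      simp only [hSdef, if_pos h1, if_pos h2] at hv hnv ⊢
      rw [Function.iterate_succ_apply'] at hnv
      by_contra hcard
      push_neg at hcard
      have hbr : IsBranchIn G ((pruneStep G)^[k] Set.univ) v := by
        unfold IsBranchIn; omega
      exact hnv ⟨hv, Or.inl hbr⟩
    · by_cases h2 : k ≤ n
      · have h3 : k = n := by omega
        simp only [hSdef, if_pos h2] at hv ⊢
        rw [h3] at hv ⊢
        exact (hpl.2 v hv).2
      · simp only [hSdef, if_neg h1, if_neg h2] at hv hnv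
        exact absurd hv hnv
  exact S17.PChain.exists_locating (hc := hconn) (ha := hacyc)
    (ch := ⟨S, n+1, a0, Δ, by omega, hmono, hconv, hzero, htop, hdeg2,
     fun v => (hΔ v).1, fun v => (hΔ v).2⟩)
end
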